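/- Let A be a finite alphabet with at least 2 letters, ℓ ∈ A, and x a bi-infinite word over A. If L_ℓ(x) (resp. R_ℓ(x)) is the natural coding of a regular interval exchange transformation for the pair of orders (≤, ⪯) on A, then x is also the natural coding of a regular interval exchange transformation for the same pair of orders. -/

import Mathlib

open List

variable {A : Type*} {B : Type*} {C : Type*}

/-- `w` is a factor of the bi-infinite word `x`. -/
def IsFactor (x : ℤ → A) (w : List A) : Prop :=
  ∃ i : ℤ, ∀ j : Fin w.length, x (i + (j : ℕ)) = w.get j

/-- Left extensions `E⁻_x(w)`. -/
def extL (x : ℤ → A) (w : List A) : Set A := {a | IsFactor x (a :: w)}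

/-- Right extensions `E⁺_x(w)`. -/
def extR (x : ℤ → A) (w : List A) : Set A := {b | IsFactor x (w ++ [b])}

/-- Bi-extensions `E_x(w)`. -/
def extB (x : ℤ → A) (w : List A) : Set (A × A) :=
  {p | IsFactor x (p.1 :: (w ++ [p.2]))}

/-- The multiplicity `m_x(w)`. -/
noncomputable def mult (x : ℤ → A) (w : List A) : ℤ :=
  ((extB x w).ncard : ℤ) - (extL x w).ncard - (extR x w).ncard + 1

/-- The extension graph `𝓔_x(w)`: bipartite graph on the disjoint union of
`E⁻_x(w)` and `E⁺_x(w)`, with an edge between left vertex `a` and right vertex `b`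
iff `(a, b) ∈ E_x(w)`. -/
def extGraph (x : ℤ → A) (w : List A) :
    SimpleGraph ({a : A // a ∈ extL x w} ⊕ {b : A // b ∈ extR x w}) :=
  SimpleGraph.fromRel fun u v =>
    ∃ (a : {a : A // a ∈ extL x w}) (b : {b : A // b ∈ extR x w}),
      u = Sum.inl a ∧ v = Sum.inr b ∧ (a.1, b.1) ∈ extB x w

/-- The factor complexity `p_x(n)`. -/
noncomputable def cplx (x : ℤ → A) (n : ℕ) : ℕ :=
  Set.ncard {w : List A | IsFactor x w ∧ w.length = n}

/-- Application of a morphism (given by its values on letters) to a finite word. -/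
def appw (σ : A → List B) (w : List A) : List B := (w.map σ).flatten

/-- `y` is the image of the bi-infinite word `x` under the (non-erasing) morphism `σ`,
i.e. `y = ⋯σ(x_{-1})σ(x_0)σ(x_1)⋯`, anchored so that `σ(x_0)` starts at position `0`. -/
def IsImage (σ : A → List B) (x : ℤ → A) (y : ℤ → B) : Prop :=
  ∃ t : ℤ → ℤ, t 0 = 0 ∧ (∀ n : ℤ, t (n + 1) = t n + (σ (x n)).length) ∧
    ∀ (n : ℤ) (j : Fin (σ (x n)).length), y (t n + (j : ℕ)) = (σ (x n)).get j

/-- The width `‖σ‖` of a morphism. -/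
noncomputable def width [Fintype A] (σ : A → List B) : ℕ :=
  Finset.univ.sup fun a => (σ a).length

/-- The Arnoux–Rauzy morphism `L_ℓ : ℓ ↦ ℓ, a ↦ ℓa (a ≠ ℓ)`. -/
def ARL [DecidableEq A] (ℓ : A) : A → List A := fun a => if a = ℓ then [ℓ] else [ℓ, a]

/-- The Arnoux–Rauzy morphism `R_ℓ : ℓ ↦ ℓ, a ↦ aℓ (a ≠ ℓ)`. -/
def ARR [DecidableEq A] (ℓ : A) : A → List A := fun a => if a = ℓ then [ℓ] else [a, ℓ]

/-- Composition of morphisms (given by their values on letters): `mcomp σ τ = σ ∘ τ`. -/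
def mcomp (σ : B → List C) (τ : A → List B) : A → List C := fun a => ((τ a).map σ).flatten

open Classical in
/-- `∑_{b < a} λ_b` for the linear order `le`: the left endpoint of the interval of `a`. -/
noncomputable def lsum [Fintype A] (le : LinearOrder A) (lam : A → ℝ) (a : A) : ℝ :=
  letI := le
  ∑ b ∈ Finset.univ.filter (fun b => b < a), lam b

/-- The interval `I_a = [∑_{b < a} λ_b, ∑_{b ≤ a} λ_b)` for the linear order `le`. -/
noncomputable def Ival [Fintype A] (le : LinearOrder A) (lam : A → ℝ) (a : A) : Set ℝ :=
  Set.Ico (lsum le lam a) (lsum le lam a + lam a)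

open Classical in
/-- The interval exchange transformation determined by the orders `le1`, `le2` and the
lengths `lam`: it translates `I_a` (built from `le1`) onto `J_a` (built from `le2`). -/
noncomputable def Tmap [Fintype A] (le1 le2 : LinearOrder A) (lam : A → ℝ) (z : ℝ) : ℝ :=
  if h : ∃ a, z ∈ Ival le1 lam a then
    z - lsum le1 lam h.choose + lsum le2 lam h.choose
  else z

/-- `n`-th power (for `n : ℤ`) of the interval exchange transformation. -/
noncomputable def TmapZ [Fintype A] (le1 le2 : LinearOrder A) (lam : A → ℝ) (n : ℤ)
    (z : ℝ) : ℝ :=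
  if 0 ≤ n then (Tmap le1 le2 lam)^[n.toNat] z else (Tmap le2 le1 lam)^[(-n).toNat] z

/-- The (two-sided) orbit of `z` under the interval exchange transformation. -/
def orbitIET [Fintype A] (le1 le2 : LinearOrder A) (lam : A → ℝ) (z : ℝ) : Set ℝ :=
  {y | ∃ n : ℤ, y = TmapZ le1 le2 lam n z}

/-- The data `(le1, le2, lam)` defines a regular interval exchange transformation:
the lengths are positive and sum to 1, and the orbits of the nonzero left endpoints
are infinite and pairwise disjoint. -/
def IsRIET [Fintype A] (le1 le2 : LinearOrder A) (lam : A → ℝ) : Prop :=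
  (∀ a, 0 < lam a) ∧ (∑ a, lam a) = 1 ∧
    (∀ a, lsum le1 lam a ≠ 0 → (orbitIET le1 le2 lam (lsum le1 lam a)).Infinite) ∧
    ∀ a b : A, a ≠ b → lsum le1 lam a ≠ 0 → lsum le1 lam b ≠ 0 →
      Disjoint (orbitIET le1 le2 lam (lsum le1 lam a)) (orbitIET le1 le2 lam (lsum le1 lam b))

/-- `x` is the natural coding of the point `z` under the interval exchange
transformation determined by `(le1, le2, lam)`. -/
def IsNaturalCoding [Fintype A] (le1 le2 : LinearOrder A) (lam : A → ℝ) (z : ℝ)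
    (x : ℤ → A) : Prop :=
  ∀ n : ℤ, TmapZ le1 le2 lam n z ∈ Ival le1 lam (x n)

/-- The strict order relation of an explicit linear order. -/
def oLT (le : LinearOrder A) (a b : A) : Prop :=
  letI := le
  a < b

/-- The order relation of an explicit linear order. -/
def oLE (le : LinearOrder A) (a b : A) : Prop :=
  letI := le
  a ≤ b

open Classical in
/-- The set of the `i` smallest elements of `A` for the linear order `le`. -/
noncomputable def smallSet [Fintype A] (le : LinearOrder A) (i : ℕ) : Finset A :=
  letI := le
  Finset.univ.filter fun a => (Finset.univ.filter fun b => b < a).card < i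
section Part1

variable {A : Type*} [Fintype A]

lemma lsum_nonneg (le : LinearOrder A) (lam : A → ℝ) (hpos : ∀ a, 0 < lam a) (a : A) :
    0 ≤ lsum le lam a := by
  unfold lsum
  exact Finset.sum_nonneg fun b _ => (hpos b).le

lemma lsum_add_le (le : LinearOrder A) (lam : A → ℝ) (hpos : ∀ a, 0 < lam a) {a c : A}
    (h : oLT le a c) : lsum le lam a + lam a ≤ lsum le lam c := by
  letI := le
  unfold lsum
  rw [add_comm, ← Finset.sum_insert (by simp : a ∉ Finset.univ.filter (fun b => b < a))]
  apply Finset.sum_le_sum_of_subset_of_nonneg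
  · intro b hb
    simp only [Finset.mem_insert, Finset.mem_filter, Finset.mem_univ, true_and] at hb ⊢
    rcases hb with rfl | hb
    · exact h
    · exact hb.trans h
  · exact fun b _ _ => (hpos b).le

lemma lsum_add_le_one (le : LinearOrder A) (lam : A → ℝ) (hpos : ∀ a, 0 < lam a)
    (hsum : ∑ a, lam a = 1) (a : A) : lsum le lam a + lam a ≤ 1 := by
  letI := le
  unfold lsum
  rw [add_comm, ← Finset.sum_insert (by simp : a ∉ Finset.univ.filter (fun b => b < a)), ← hsum]
  exact Finset.sum_le_sum_of_subset_of_nonneg (fun b _ => Finset.mem_univ b)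
    (fun b _ _ => (hpos b).le)

lemma lsum_top (le : LinearOrder A) (lam : A → ℝ) (hsum : ∑ a, lam a = 1) {a : A}
    (h : ∀ b, oLE le b a) : lsum le lam a + lam a = 1 := by
  letI := le
  unfold lsum
  rw [add_comm, ← Finset.sum_insert (by simp : a ∉ Finset.univ.filter (fun b => b < a)), ← hsum]
  congr 1
  ext b
  simp only [Finset.mem_insert, Finset.mem_filter, Finset.mem_univ, true_and, iff_true]
  rcases (h b).lt_or_eq with h' | h'
  · exact Or.inr h'
  · exact Or.inl h'

lemma lsum_bot (le : LinearOrder A) (lam : A → ℝ) {a : A}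
    (h : ∀ b, oLE le a b) : lsum le lam a = 0 := by
  letI := le
  unfold lsum
  rw [Finset.filter_eq_empty_iff.2 (fun {b} _ => not_lt.2 (h b)), Finset.sum_empty]

lemma univ_nonempty_of_sum (lam : A → ℝ) (hsum : ∑ a, lam a = 1) :
    (Finset.univ : Finset A).Nonempty := by
  by_contra h
  rw [Finset.not_nonempty_iff_eq_empty] at h
  rw [h, Finset.sum_empty] at hsum
  norm_num at hsum

lemma exists_mem_Ival (le : LinearOrder A) (lam : A → ℝ) (hpos : ∀ a, 0 < lam a)
    (hsum : ∑ a, lam a = 1) {z : ℝ} (hz : z ∈ Set.Ico (0:ℝ) 1) :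
    ∃ a, z ∈ Ival le lam a := by
  letI := le
  classical
  have hne : (Finset.univ : Finset A).Nonempty := univ_nonempty_of_sum lam hsum
  have hmin : ∀ b, oLE le (Finset.univ.min' hne) b :=
    fun b => Finset.min'_le _ b (Finset.mem_univ b)
  set s : Finset A := Finset.univ.filter (fun b => lsum le lam b ≤ z) with hs
  have ha0 : (Finset.univ.min' hne) ∈ s := by
    rw [hs, Finset.mem_filter]
    refine ⟨Finset.mem_univ _, ?_⟩
    rw [lsum_bot le lam hmin]
    exact hz.1
  have hsne : s.Nonempty := ⟨_, ha0⟩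
  have hamem := s.max'_mem hsne
  have ha : lsum le lam (s.max' hsne) ≤ z := (Finset.mem_filter.mp hamem).2
  refine ⟨s.max' hsne, ha, ?_⟩
  by_contra hcon
  push_neg at hcon
  by_cases htop : ∀ b, b ≤ s.max' hsne
  · have h1 := lsum_top le lam hsum (a := s.max' hsne) htop
    have h2 := hz.2
    linarith
  · push_neg at htop
    obtain ⟨b, hb⟩ := htop
    set u : Finset A := Finset.univ.filter (fun c => s.max' hsne < c) with hu
    have hune : u.Nonempty := ⟨b, Finset.mem_filter.mpr ⟨Finset.mem_univ _, hb⟩⟩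
    have hcmem := u.min'_mem hune
    have hac : s.max' hsne < u.min' hune := (Finset.mem_filter.mp hcmem).2
    have hlc : lsum le lam (u.min' hune) = lsum le lam (s.max' hsne) + lam (s.max' hsne) := by
      unfold lsum
      rw [add_comm, ← Finset.sum_insert
        (by simp : s.max' hsne ∉ Finset.univ.filter (fun d => d < s.max' hsne))]
      congr 1
      ext d
      simp only [Finset.mem_filter, Finset.mem_univ, true_and, Finset.mem_insert]
      constructor
      · intro hd
        rcases le_or_gt d (s.max' hsne) with h' | h'
        · rcases h'.lt_or_eq with h'' | h''
          · exact Or.inr h''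
          · exact Or.inl h''
        · exfalso
          have hle : u.min' hune ≤ d := Finset.min'_le _ d (Finset.mem_filter.mpr ⟨Finset.mem_univ _, h'⟩)
          exact absurd (hle.trans_lt hd) (lt_irrefl _)
      · rintro (rfl | hd)
        · exact hac
        · exact hd.trans hac
    have hcs : u.min' hune ∈ s := by
      rw [hs, Finset.mem_filter]
      exact ⟨Finset.mem_univ _, by rw [hlc]; linarith⟩
    have hle := Finset.le_max' s _ hcs
    exact absurd (hle.trans_lt hac) (lt_irrefl _)

lemma Ival_unique (le : LinearOrder A) (lam : A → ℝ) (hpos : ∀ a, 0 < lam a) {z : ℝ} {a b : A}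
    (ha : z ∈ Ival le lam a) (hb : z ∈ Ival le lam b) : a = b := by
  letI := le
  by_contra h
  obtain ⟨ha1, ha2⟩ := ha
  obtain ⟨hb1, hb2⟩ := hb
  rcases lt_or_gt_of_ne h with h' | h'
  · have := lsum_add_le le lam hpos (a := a) (c := b) h'
    linarith
  · have := lsum_add_le le lam hpos (a := b) (c := a) h'
    linarith

lemma Ival_subset (le : LinearOrder A) (lam : A → ℝ) (hpos : ∀ a, 0 < lam a)
    (hsum : ∑ a, lam a = 1) (a : A) : Ival le lam a ⊆ Set.Ico (0:ℝ) 1 := by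
  intro z hz
  obtain ⟨h1, h2⟩ := hz
  have h3 := lsum_nonneg le lam hpos a
  have h4 := lsum_add_le_one le lam hpos hsum a
  exact ⟨by linarith, by linarith⟩

lemma lsum_mem_Ival (le : LinearOrder A) (lam : A → ℝ) (hpos : ∀ a, 0 < lam a) (a : A) :
    lsum le lam a ∈ Ival le lam a :=
  ⟨le_refl _, by linarith [hpos a]⟩

end Part1
section Part2

variable {A : Type*} [Fintype A] (le1 le2 : LinearOrder A) (lam : A → ℝ)

lemma Tmap_eq (hpos : ∀ a, 0 < lam a) {z : ℝ} {a : A} (hz : z ∈ Ival le1 lam a) :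
    Tmap le1 le2 lam z = z - lsum le1 lam a + lsum le2 lam a := by
  have h : ∃ b, z ∈ Ival le1 lam b := ⟨a, hz⟩
  rw [Tmap, dif_pos h, Ival_unique le1 lam hpos h.choose_spec hz]

lemma Tmap_mem (hpos : ∀ a, 0 < lam a) {z : ℝ} {a : A} (hz : z ∈ Ival le1 lam a) :
    Tmap le1 le2 lam z ∈ Ival le2 lam a := by
  rw [Tmap_eq le1 le2 lam hpos hz]
  obtain ⟨h1, h2⟩ := hz
  exact ⟨by linarith, by linarith⟩

lemma Tmap_mem01 (hpos : ∀ a, 0 < lam a) (hsum : ∑ a, lam a = 1) {z : ℝ}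
    (hz : z ∈ Set.Ico (0:ℝ) 1) : Tmap le1 le2 lam z ∈ Set.Ico (0:ℝ) 1 := by
  obtain ⟨a, ha⟩ := exists_mem_Ival le1 lam hpos hsum hz
  exact Ival_subset le2 lam hpos hsum a (Tmap_mem le1 le2 lam hpos ha)

lemma Tmap_inv (hpos : ∀ a, 0 < lam a) (hsum : ∑ a, lam a = 1) {z : ℝ}
    (hz : z ∈ Set.Ico (0:ℝ) 1) : Tmap le2 le1 lam (Tmap le1 le2 lam z) = z := by
  obtain ⟨a, ha⟩ := exists_mem_Ival le1 lam hpos hsum hz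
  rw [Tmap_eq le2 le1 lam hpos (Tmap_mem le1 le2 lam hpos ha), Tmap_eq le1 le2 lam hpos ha]
  ring

lemma iterate_mem01 (F : ℝ → ℝ) (hF : ∀ z ∈ Set.Ico (0:ℝ) 1, F z ∈ Set.Ico (0:ℝ) 1)
    (k : ℕ) {z : ℝ} (hz : z ∈ Set.Ico (0:ℝ) 1) : F^[k] z ∈ Set.Ico (0:ℝ) 1 := by
  induction k generalizing z with
  | zero => simpa
  | succ k ih => rw [Function.iterate_succ_apply]; exact ih (hF z hz)

lemma TmapZ_mem01 (hpos : ∀ a, 0 < lam a) (hsum : ∑ a, lam a = 1) (n : ℤ) {z : ℝ}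
    (hz : z ∈ Set.Ico (0:ℝ) 1) : TmapZ le1 le2 lam n z ∈ Set.Ico (0:ℝ) 1 := by
  rw [TmapZ]
  split
  · exact iterate_mem01 _ (fun w hw => Tmap_mem01 le1 le2 lam hpos hsum hw) _ hz
  · exact iterate_mem01 _ (fun w hw => Tmap_mem01 le2 le1 lam hpos hsum hw) _ hz

lemma TmapZ_zero (z : ℝ) : TmapZ le1 le2 lam 0 z = z := by simp [TmapZ]

lemma TmapZ_succ (hpos : ∀ a, 0 < lam a) (hsum : ∑ a, lam a = 1) (n : ℤ) {z : ℝ}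
    (hz : z ∈ Set.Ico (0:ℝ) 1) :
    TmapZ le1 le2 lam (n + 1) z = Tmap le1 le2 lam (TmapZ le1 le2 lam n z) := by
  rcases le_or_gt 0 n with hn | hn
  · rw [TmapZ, TmapZ, if_pos hn, if_pos (by omega)]
    have h1 : (n + 1).toNat = n.toNat + 1 := by omega
    rw [h1, Function.iterate_succ_apply']
  · rcases eq_or_lt_of_le (by omega : n + 1 ≤ 0) with hn1 | hn1
    · have hn' : n = -1 := by omega
      subst hn'
      rw [show (-1 : ℤ) + 1 = 0 by ring, TmapZ_zero, TmapZ, if_neg (by omega)]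
      rw [show (-(-1) : ℤ).toNat = 1 by rfl, Function.iterate_one]
      exact (Tmap_inv le2 le1 lam hpos hsum hz).symm
    · rw [TmapZ, TmapZ, if_neg (by omega), if_neg (by omega)]
      have h1 : (-n).toNat = (-(n+1)).toNat + 1 := by omega
      rw [h1, Function.iterate_succ_apply']
      exact (Tmap_inv le2 le1 lam hpos hsum (iterate_mem01 _
        (fun w hw => Tmap_mem01 le2 le1 lam hpos hsum hw) _ hz)).symm

lemma TmapZ_pred (hpos : ∀ a, 0 < lam a) (hsum : ∑ a, lam a = 1) (n : ℤ) {z : ℝ}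
    (hz : z ∈ Set.Ico (0:ℝ) 1) :
    TmapZ le1 le2 lam (n - 1) z = Tmap le2 le1 lam (TmapZ le1 le2 lam n z) := by
  have h := TmapZ_succ le1 le2 lam hpos hsum (n-1) hz
  rw [sub_add_cancel] at h
  rw [h, Tmap_inv le1 le2 lam hpos hsum (TmapZ_mem01 le1 le2 lam hpos hsum (n-1) hz)]

lemma TmapZ_add (hpos : ∀ a, 0 < lam a) (hsum : ∑ a, lam a = 1) (m n : ℤ) {z : ℝ}
    (hz : z ∈ Set.Ico (0:ℝ) 1) :
    TmapZ le1 le2 lam (m + n) z = TmapZ le1 le2 lam m (TmapZ le1 le2 lam n z) := by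
  induction m using Int.induction_on with
  | zero => rw [zero_add, TmapZ_zero]
  | succ k ih =>
      rw [show (k + 1 : ℤ) + n = (k + n) + 1 by ring,
        TmapZ_succ le1 le2 lam hpos hsum _ hz, ih,
        ← TmapZ_succ le1 le2 lam hpos hsum _ (TmapZ_mem01 le1 le2 lam hpos hsum n hz)]
  | pred k ih =>
      rw [show (-k - 1 : ℤ) + n = (-k + n) - 1 by ring,
        TmapZ_pred le1 le2 lam hpos hsum _ hz, ih,
        ← TmapZ_pred le1 le2 lam hpos hsum _ (TmapZ_mem01 le1 le2 lam hpos hsum n hz)]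

lemma orbit_finite_of_periodic (hpos : ∀ a, 0 < lam a) (hsum : ∑ a, lam a = 1) {k : ℤ}
    (hk : 1 ≤ k) {z : ℝ} (hz : z ∈ Set.Ico (0:ℝ) 1)
    (hper : TmapZ le1 le2 lam k z = z) : (orbitIET le1 le2 lam z).Finite := by
  have hneg : TmapZ le1 le2 lam (-k) z = z := by
    have h := congrArg (TmapZ le1 le2 lam (-k)) hper
    rw [← TmapZ_add le1 le2 lam hpos hsum (-k) k hz, neg_add_cancel, TmapZ_zero] at h
    exact h.symm
  have hmul : ∀ t : ℤ, TmapZ le1 le2 lam (k * t) z = z := by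
    intro t
    induction t using Int.induction_on with
    | zero => rw [mul_zero, TmapZ_zero]
    | succ m ih =>
        rw [show k * (m + 1) = k + k * m by ring,
          TmapZ_add le1 le2 lam hpos hsum _ _ hz, ih, hper]
    | pred m ih =>
        rw [show k * (-m - 1) = -k + k * (-m) by ring,
          TmapZ_add le1 le2 lam hpos hsum _ _ hz, ih, hneg]
  have key : ∀ n : ℤ, TmapZ le1 le2 lam n z = TmapZ le1 le2 lam (n % k) z := by
    intro n
    conv_lhs => rw [← Int.emod_add_mul_ediv n k]
    rw [TmapZ_add le1 le2 lam hpos hsum _ _ hz, hmul]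
  apply Set.Finite.subset ((Set.finite_Icc (0:ℤ) (k-1)).image (fun i => TmapZ le1 le2 lam i z))
  rintro w ⟨n, rfl⟩
  refine ⟨n % k, ?_, (key n).symm⟩
  have h1 := Int.emod_nonneg n (by omega : k ≠ 0)
  have h2 := Int.emod_lt_of_pos n (by omega : 0 < k)
  simp only [Set.mem_Icc]
  omega

end Part2
/-- The renormalized length vector after Rauzy induction at `ℓ`. -/
noncomputable def lam2 {A : Type*} [DecidableEq A] (lam : A → ℝ) (ℓ : A) : A → ℝ :=
  fun a => if a = ℓ then (2 * lam ℓ - 1) / lam ℓ else lam a / lam ℓ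

section Part3

variable {A : Type*} [Fintype A] [DecidableEq A] (le1 le2 : LinearOrder A) (lam : A → ℝ) (ℓ : A)

lemma lam2_pos (hpos : ∀ a, 0 < lam a) (hl : 1 - lam ℓ < lam ℓ) : ∀ a, 0 < lam2 lam ℓ a := by
  intro a
  unfold lam2
  split
  · apply div_pos (by linarith) (hpos ℓ)
  · exact div_pos (hpos a) (hpos ℓ)

lemma sum_erase_lam (hsum : ∑ a, lam a = 1) :
    ∑ b ∈ Finset.univ.erase ℓ, lam b = 1 - lam ℓ := by
  have h := Finset.sum_erase_add Finset.univ lam (Finset.mem_univ ℓ)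
  rw [hsum] at h
  linarith

lemma lam2_sum (hpos : ∀ a, 0 < lam a) (hsum : ∑ a, lam a = 1) : ∑ a, lam2 lam ℓ a = 1 := by
  rw [← Finset.sum_erase_add Finset.univ _ (Finset.mem_univ ℓ)]
  have h1 : ∑ b ∈ Finset.univ.erase ℓ, lam2 lam ℓ b = ∑ b ∈ Finset.univ.erase ℓ, lam b / lam ℓ := by
    apply Finset.sum_congr rfl
    intro b hb
    exact if_neg (Finset.ne_of_mem_erase hb)
  rw [h1, ← Finset.sum_div, sum_erase_lam lam ℓ hsum]
  have h2 : lam2 lam ℓ ℓ = (2 * lam ℓ - 1) / lam ℓ := if_pos rfl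
  rw [h2]
  have h3 : lam ℓ ≠ 0 := (hpos ℓ).ne'
  rw [← add_div, div_eq_one_iff_eq h3]
  ring

lemma lsum_lam2_min (hpos : ∀ a, 0 < lam a) {a : A} (hmin : ∀ b, oLE le1 ℓ b) (ha : a ≠ ℓ) :
    lam ℓ * lsum le1 (lam2 lam ℓ) a = lsum le1 lam a - (1 - lam ℓ) := by
  letI := le1
  have hla : ℓ < a := (hmin a).lt_of_ne (Ne.symm ha)
  unfold lsum
  have hℓ : ℓ ∈ Finset.univ.filter (fun b => b < a) := by
    simp only [Finset.mem_filter, Finset.mem_univ, true_and]; exact hla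
  rw [← Finset.sum_erase_add _ _ hℓ, ← Finset.sum_erase_add _ lam hℓ]
  have h1 : ∑ b ∈ (Finset.univ.filter (fun b => b < a)).erase ℓ, lam2 lam ℓ b
      = (∑ b ∈ (Finset.univ.filter (fun b => b < a)).erase ℓ, lam b) / lam ℓ := by
    rw [Finset.sum_div]
    exact Finset.sum_congr rfl fun b hb => if_neg (Finset.ne_of_mem_erase hb)
  rw [h1]
  have h2 : lam2 lam ℓ ℓ = (2 * lam ℓ - 1) / lam ℓ := if_pos rfl
  rw [h2]
  have h3 : lam ℓ ≠ 0 := (hpos ℓ).ne'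
  field_simp
  ring

lemma lsum_lam2_min_self (hmin : ∀ b, oLE le1 ℓ b) : lsum le1 (lam2 lam ℓ) ℓ = 0 :=
  lsum_bot le1 _ hmin

lemma lsum_lam2_max (hpos : ∀ a, 0 < lam a) {a : A} (hmax : ∀ b, oLE le1 b ℓ) (ha : a ≠ ℓ) :
    lam ℓ * lsum le1 (lam2 lam ℓ) a = lsum le1 lam a := by
  letI := le1
  unfold lsum
  have h1 : ∑ b ∈ Finset.univ.filter (fun b => b < a), lam2 lam ℓ b
      = (∑ b ∈ Finset.univ.filter (fun b => b < a), lam b) / lam ℓ := by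
    rw [Finset.sum_div]
    apply Finset.sum_congr rfl
    intro b hb
    simp only [Finset.mem_filter, Finset.mem_univ, true_and] at hb
    have hbne : b ≠ ℓ := by
      intro h
      subst h
      exact absurd ((hmax a).trans_lt hb) (lt_irrefl _)
    exact if_neg hbne
  rw [h1]
  have h3 : lam ℓ ≠ 0 := (hpos ℓ).ne'
  field_simp

lemma lsum_lam2_max_self (hpos : ∀ a, 0 < lam a) (hsum : ∑ a, lam a = 1)
    (hmax : ∀ b, oLE le1 b ℓ) :
    lam ℓ * lsum le1 (lam2 lam ℓ) ℓ = 1 - lam ℓ := by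
  letI := le1
  unfold lsum
  have hfe : Finset.univ.filter (fun b => b < ℓ) = Finset.univ.erase ℓ := by
    ext b
    simp only [Finset.mem_filter, Finset.mem_univ, true_and, Finset.mem_erase, and_true]
    exact ⟨fun h => ne_of_lt h, fun h => (hmax b).lt_of_ne h⟩
  rw [hfe]
  have h1 : ∑ b ∈ Finset.univ.erase ℓ, lam2 lam ℓ b
      = (∑ b ∈ Finset.univ.erase ℓ, lam b) / lam ℓ := by
    rw [Finset.sum_div]
    exact Finset.sum_congr rfl fun b hb => if_neg (Finset.ne_of_mem_erase hb)
  rw [h1, sum_erase_lam lam ℓ hsum]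
  have h3 : lam ℓ ≠ 0 := (hpos ℓ).ne'
  field_simp

end Part3
/-- `ℓ` is first for one order and last for the other. -/
def ARcase {A : Type*} (le1 le2 : LinearOrder A) (ℓ : A) : Prop :=
  ((∀ b, oLE le1 ℓ b) ∧ (∀ b, oLE le2 b ℓ)) ∨ ((∀ b, oLE le1 b ℓ) ∧ (∀ b, oLE le2 ℓ b))

lemma ARcase_symm {A : Type*} {le1 le2 : LinearOrder A} {ℓ : A} (h : ARcase le1 le2 ℓ) :
    ARcase le2 le1 ℓ :=
  h.elim (fun h' => Or.inr ⟨h'.2, h'.1⟩) (fun h' => Or.inl ⟨h'.2, h'.1⟩)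

section Part4

variable {A : Type*} [Fintype A] [DecidableEq A] (le1 le2 : LinearOrder A) (lam : A → ℝ) (ℓ : A)

lemma extreme (hpos : ∀ a, 0 < lam a) (hsum : ∑ a, lam a = 1)
    (hO1 : ∀ a, a ≠ ℓ → (Ival le1 lam a ∩ Ival le2 lam ℓ).Nonempty) :
    (∀ b, oLE le1 ℓ b) ∨ (∀ b, oLE le1 b ℓ) := by
  letI := le1
  by_contra h
  push_neg at h
  obtain ⟨⟨b1, hb1⟩, ⟨b2, hb2⟩⟩ := h
  have hb1' : b1 < ℓ := not_le.1 hb1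
  have hb2' : ℓ < b2 := not_le.1 hb2
  have hne : (Finset.univ : Finset A).Nonempty := univ_nonempty_of_sum lam hsum
  set a0 := Finset.univ.min' hne with ha0
  set b0 := Finset.univ.max' hne with hb0
  have ha0ℓ : a0 < ℓ := lt_of_le_of_lt (Finset.min'_le _ b1 (Finset.mem_univ b1)) hb1'
  have hb0ℓ : ℓ < b0 := lt_of_lt_of_le hb2' (Finset.le_max' _ b2 (Finset.mem_univ b2))
  obtain ⟨v, hvI, hvJ⟩ := hO1 a0 (ne_of_lt ha0ℓ)
  obtain ⟨w, hwI, hwJ⟩ := hO1 b0 (ne_of_gt hb0ℓ)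
  have h1 : lsum le1 lam a0 + lam a0 ≤ lsum le1 lam ℓ := lsum_add_le le1 lam hpos ha0ℓ
  have h2 : lsum le1 lam ℓ + lam ℓ ≤ lsum le1 lam b0 := lsum_add_le le1 lam hpos hb0ℓ
  obtain ⟨hv1, hv2⟩ := hvI
  obtain ⟨hv3, hv4⟩ := hvJ
  obtain ⟨hw1, hw2⟩ := hwI
  obtain ⟨hw3, hw4⟩ := hwJ
  have := hpos ℓ
  linarith

lemma geo (hcard : 2 ≤ Fintype.card A) (hpos : ∀ a, 0 < lam a) (hsum : ∑ a, lam a = 1)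
    (hO1 : ∀ a, a ≠ ℓ → (Ival le1 lam a ∩ Ival le2 lam ℓ).Nonempty)
    (hO1' : ∀ a, a ≠ ℓ → (Ival le2 lam a ∩ Ival le1 lam ℓ).Nonempty)
    (hO2 : (Ival le1 lam ℓ ∩ Ival le2 lam ℓ).Nonempty) :
    ARcase le1 le2 ℓ ∧ 1 - lam ℓ < lam ℓ := by
  have e1 := extreme le1 le2 lam ℓ hpos hsum hO1
  have e2 := extreme le2 le1 lam ℓ hpos hsum hO1'
  obtain ⟨a, hane⟩ := Fintype.exists_ne_of_one_lt_card (by omega) ℓ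
  obtain ⟨v0, hv0I, hv0J⟩ := hO2
  rcases e1 with h1 | h1 <;> rcases e2 with h2 | h2
  · -- min, min : contradiction
    exfalso
    have hp : lsum le1 lam ℓ = lsum le2 lam ℓ := by
      rw [lsum_bot le1 lam h1, lsum_bot le2 lam h2]
    obtain ⟨v, hvI, hvJ⟩ := hO1 a hane
    have hvI2 : v ∈ Ival le1 lam ℓ := by unfold Ival; rw [hp]; exact hvJ
    exact hane (Ival_unique le1 lam hpos hvI hvI2)
  · -- min, max
    refine ⟨Or.inl ⟨h1, h2⟩, ?_⟩
    have hp1 : lsum le1 lam ℓ = 0 := lsum_bot le1 lam h1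
    have hp2 : lsum le2 lam ℓ = 1 - lam ℓ := by linarith [lsum_top le2 lam hsum h2]
    obtain ⟨hv1, hv2⟩ := hv0I
    obtain ⟨hv3, hv4⟩ := hv0J
    rw [hp1] at hv2
    rw [hp2] at hv3
    linarith
  · -- max, min
    refine ⟨Or.inr ⟨h1, h2⟩, ?_⟩
    have hp1 : lsum le1 lam ℓ = 1 - lam ℓ := by linarith [lsum_top le1 lam hsum h1]
    have hp2 : lsum le2 lam ℓ = 0 := lsum_bot le2 lam h2
    obtain ⟨hv1, hv2⟩ := hv0I
    obtain ⟨hv3, hv4⟩ := hv0J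
    rw [hp1] at hv1
    rw [hp2] at hv4
    linarith
  · -- max, max : contradiction
    exfalso
    have hp : lsum le1 lam ℓ = lsum le2 lam ℓ := by
      have ha1 := lsum_top le1 lam hsum h1
      have ha2 := lsum_top le2 lam hsum h2
      linarith
    obtain ⟨v, hvI, hvJ⟩ := hO1 a hane
    have hvI2 : v ∈ Ival le1 lam ℓ := by unfold Ival; rw [hp]; exact hvJ
    exact hane (Ival_unique le1 lam hpos hvI hvI2)

lemma pq_eq (hsum : ∑ a, lam a = 1) (hcase : ARcase le1 le2 ℓ) :
    (lsum le1 lam ℓ = 0 ∧ lsum le2 lam ℓ = 1 - lam ℓ) ∨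
      (lsum le1 lam ℓ = 1 - lam ℓ ∧ lsum le2 lam ℓ = 0) := by
  rcases hcase with ⟨h1, h2⟩ | ⟨h1, h2⟩
  · exact Or.inl ⟨lsum_bot le1 lam h1, by linarith [lsum_top le2 lam hsum h2]⟩
  · exact Or.inr ⟨by linarith [lsum_top le1 lam hsum h1], lsum_bot le2 lam h2⟩

lemma Gbound (hpos : ∀ a, 0 < lam a) (hsum : ∑ a, lam a = 1) (hcase : ARcase le1 le2 ℓ)
    (hl : 1 - lam ℓ < lam ℓ) :
    ∀ a, a ≠ ℓ → lsum le2 lam ℓ ≤ lsum le1 lam a ∧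
      lsum le1 lam a + lam a ≤ lsum le2 lam ℓ + lam ℓ := by
  intro a ha
  letI := le1
  rcases hcase with ⟨h1, h2⟩ | ⟨h1, h2⟩
  · have hq : lsum le2 lam ℓ = 1 - lam ℓ := by linarith [lsum_top le2 lam hsum h2]
    have hp : lsum le1 lam ℓ = 0 := lsum_bot le1 lam h1
    have hla : ℓ < a := (h1 a).lt_of_ne (Ne.symm ha)
    have h3 := lsum_add_le le1 lam hpos hla
    have h4 := lsum_add_le_one le1 lam hpos hsum a
    constructor <;> linarith
  · have hq : lsum le2 lam ℓ = 0 := lsum_bot le2 lam h2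
    have hp : lsum le1 lam ℓ = 1 - lam ℓ := by linarith [lsum_top le1 lam hsum h1]
    have hla : a < ℓ := (h1 a).lt_of_ne ha
    have h3 := lsum_add_le le1 lam hpos hla
    have h4 := lsum_nonneg le1 lam hpos a
    constructor <;> linarith

lemma lsum2_self (hpos : ∀ a, 0 < lam a) (hsum : ∑ a, lam a = 1) (hcase : ARcase le1 le2 ℓ) :
    lam ℓ * lsum le1 (lam2 lam ℓ) ℓ = lsum le1 lam ℓ := by
  rcases hcase with ⟨h1, _⟩ | ⟨h1, _⟩
  · rw [lsum_lam2_min_self le1 lam ℓ h1, lsum_bot le1 lam h1, mul_zero]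
  · rw [lsum_lam2_max_self le1 lam ℓ hpos hsum h1]
    linarith [lsum_top le1 lam hsum h1]

lemma lsum2_ne (hpos : ∀ a, 0 < lam a) (hsum : ∑ a, lam a = 1) (hcase : ARcase le1 le2 ℓ)
    {a : A} (ha : a ≠ ℓ) :
    lam ℓ * lsum le1 (lam2 lam ℓ) a = lsum le1 lam a - lsum le2 lam ℓ := by
  rcases hcase with ⟨h1, h2⟩ | ⟨h1, h2⟩
  · rw [lsum_lam2_min le1 lam ℓ hpos h1 ha]
    have hq : lsum le2 lam ℓ = 1 - lam ℓ := by linarith [lsum_top le2 lam hsum h2]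
    rw [hq]
  · rw [lsum_lam2_max le1 lam ℓ hpos h1 ha, lsum_bot le2 lam h2]
    ring

end Part4
section Part5

variable {A : Type*} [Fintype A] [DecidableEq A] (le1 le2 : LinearOrder A) (lam : A → ℝ) (ℓ : A)

/-- Forward step lemma for the `L` case (conjugation via `φ u = lam ℓ * u + lsum le1 lam ℓ`). -/
lemma stepA (hpos : ∀ a, 0 < lam a) (hsum : ∑ a, lam a = 1) (hcase : ARcase le1 le2 ℓ)
    (hl : 1 - lam ℓ < lam ℓ) {u : ℝ} {a : A} (hu : u ∈ Ival le1 (lam2 lam ℓ) a) :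
    lam ℓ * u + lsum le1 lam ℓ ∈ Ival le1 lam ℓ ∧
    (a = ℓ → Tmap le1 le2 lam (lam ℓ * u + lsum le1 lam ℓ) ∈ Ival le1 lam ℓ ∧
      lam ℓ * Tmap le1 le2 (lam2 lam ℓ) u + lsum le1 lam ℓ =
        Tmap le1 le2 lam (lam ℓ * u + lsum le1 lam ℓ)) ∧
    (a ≠ ℓ → Tmap le1 le2 lam (lam ℓ * u + lsum le1 lam ℓ) ∈ Ival le1 lam a ∧
      lam ℓ * Tmap le1 le2 (lam2 lam ℓ) u + lsum le1 lam ℓ =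
        Tmap le1 le2 lam (Tmap le1 le2 lam (lam ℓ * u + lsum le1 lam ℓ))) := by
  have hpos2 := lam2_pos lam ℓ hpos hl
  have hpq := pq_eq le1 le2 lam ℓ hsum hcase
  have hp0 : 0 ≤ lsum le1 lam ℓ := lsum_nonneg le1 lam hpos ℓ
  have hq0 : 0 ≤ lsum le2 lam ℓ := lsum_nonneg le2 lam hpos ℓ
  have hpq' : lsum le1 lam ℓ + lsum le2 lam ℓ = 1 - lam ℓ := by
    rcases hpq with ⟨h1, h2⟩ | ⟨h1, h2⟩ <;> rw [h1, h2] <;> ring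
  have hT'u : Tmap le1 le2 (lam2 lam ℓ) u =
      u - lsum le1 (lam2 lam ℓ) a + lsum le2 (lam2 lam ℓ) a := Tmap_eq le1 le2 _ hpos2 hu
  have hlℓ := hpos ℓ
  obtain ⟨hu1, hu2⟩ := hu
  have hmu1 : lam ℓ * lsum le1 (lam2 lam ℓ) a ≤ lam ℓ * u :=
    mul_le_mul_of_nonneg_left hu1 hlℓ.le
  have hmu2 : lam ℓ * u < lam ℓ * lsum le1 (lam2 lam ℓ) a + lam ℓ * lam2 lam ℓ a := by
    have := (mul_lt_mul_iff_right₀ hlℓ).2 hu2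
    rw [mul_add] at this
    exact this
  by_cases ha : a = ℓ
  · subst ha
    have hs1 := lsum2_self le1 le2 lam a hpos hsum hcase
    have hs2 := lsum2_self le2 le1 lam a hpos hsum (ARcase_symm hcase)
    have hml : lam a * lam2 lam a a = 2 * lam a - 1 := by
      unfold lam2; rw [if_pos rfl]; field_simp
    rw [hs1, hml] at hmu2
    rw [hs1] at hmu1
    have hwI : lam a * u + lsum le1 lam a ∈ Ival le1 lam a :=
      ⟨by linarith, by linarith⟩
    have hTw := Tmap_eq le1 le2 lam hpos hwI
    refine ⟨hwI, fun _ => ⟨?_, ?_⟩, fun hne => absurd rfl hne⟩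
    · rw [hTw]
      exact ⟨by linarith, by linarith⟩
    · rw [hTw, hT'u]
      linear_combination hs2 - hs1
  · have hs1 := lsum2_ne le1 le2 lam ℓ hpos hsum hcase ha
    have hs2 := lsum2_ne le2 le1 lam ℓ hpos hsum (ARcase_symm hcase) ha
    have hml : lam ℓ * lam2 lam ℓ a = lam a := by
      unfold lam2; rw [if_neg ha]; field_simp
    have hG1 := Gbound le1 le2 lam ℓ hpos hsum hcase hl a ha
    have hG2 := Gbound le2 le1 lam ℓ hpos hsum (ARcase_symm hcase) hl a ha
    rw [hs1, hml] at hmu2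
    rw [hs1] at hmu1
    have hwI : lam ℓ * u + lsum le1 lam ℓ ∈ Ival le1 lam ℓ :=
      ⟨by linarith [hG1.1], by linarith [hG1.2]⟩
    have hTw := Tmap_eq le1 le2 lam hpos hwI
    have hTwI : Tmap le1 le2 lam (lam ℓ * u + lsum le1 lam ℓ) ∈ Ival le1 lam a := by
      rw [hTw]
      exact ⟨by linarith, by linarith⟩
    have hTTw := Tmap_eq le1 le2 lam hpos hTwI
    refine ⟨hwI, fun h => absurd h ha, fun _ => ⟨hTwI, ?_⟩⟩
    rw [hTTw, hTw, hT'u]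
    linear_combination hs2 - hs1

/-- Backward step lemma for the `L` case. -/
lemma stepA' (hpos : ∀ a, 0 < lam a) (hsum : ∑ a, lam a = 1) (hcase : ARcase le1 le2 ℓ)
    (hl : 1 - lam ℓ < lam ℓ) {u : ℝ} {a : A} (hu : u ∈ Ival le2 (lam2 lam ℓ) a) :
    (a = ℓ → lam ℓ * u + lsum le1 lam ℓ ∈ Ival le2 lam ℓ ∧
      Tmap le2 le1 lam (lam ℓ * u + lsum le1 lam ℓ) ∈ Ival le1 lam ℓ ∧
      lam ℓ * Tmap le2 le1 (lam2 lam ℓ) u + lsum le1 lam ℓ =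
        Tmap le2 le1 lam (lam ℓ * u + lsum le1 lam ℓ)) ∧
    (a ≠ ℓ → lam ℓ * u + lsum le1 lam ℓ ∈ Ival le2 lam a ∧
      Tmap le2 le1 lam (lam ℓ * u + lsum le1 lam ℓ) ∈ Ival le1 lam a ∧
      lam ℓ * Tmap le2 le1 (lam2 lam ℓ) u + lsum le1 lam ℓ =
        Tmap le2 le1 lam (Tmap le2 le1 lam (lam ℓ * u + lsum le1 lam ℓ))) := by
  have hpos2 := lam2_pos lam ℓ hpos hl
  have hpq := pq_eq le1 le2 lam ℓ hsum hcase
  have hp0 : 0 ≤ lsum le1 lam ℓ := lsum_nonneg le1 lam hpos ℓ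
  have hq0 : 0 ≤ lsum le2 lam ℓ := lsum_nonneg le2 lam hpos ℓ
  have hpq' : lsum le1 lam ℓ + lsum le2 lam ℓ = 1 - lam ℓ := by
    rcases hpq with ⟨h1, h2⟩ | ⟨h1, h2⟩ <;> rw [h1, h2] <;> ring
  have hT'u : Tmap le2 le1 (lam2 lam ℓ) u =
      u - lsum le2 (lam2 lam ℓ) a + lsum le1 (lam2 lam ℓ) a := Tmap_eq le2 le1 _ hpos2 hu
  have hlℓ := hpos ℓ
  obtain ⟨hu1, hu2⟩ := hu
  have hmu1 : lam ℓ * lsum le2 (lam2 lam ℓ) a ≤ lam ℓ * u :=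
    mul_le_mul_of_nonneg_left hu1 hlℓ.le
  have hmu2 : lam ℓ * u < lam ℓ * lsum le2 (lam2 lam ℓ) a + lam ℓ * lam2 lam ℓ a := by
    have := (mul_lt_mul_iff_right₀ hlℓ).2 hu2
    rw [mul_add] at this
    exact this
  by_cases ha : a = ℓ
  · subst ha
    have hs1 := lsum2_self le1 le2 lam a hpos hsum hcase
    have hs2 := lsum2_self le2 le1 lam a hpos hsum (ARcase_symm hcase)
    have hml : lam a * lam2 lam a a = 2 * lam a - 1 := by
      unfold lam2; rw [if_pos rfl]; field_simp
    rw [hs2, hml] at hmu2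
    rw [hs2] at hmu1
    have hwJ : lam a * u + lsum le1 lam a ∈ Ival le2 lam a :=
      ⟨by linarith, by linarith⟩
    have hTw := Tmap_eq le2 le1 lam hpos hwJ
    refine ⟨fun _ => ⟨hwJ, ?_, ?_⟩, fun hne => absurd rfl hne⟩
    · rw [hTw]
      exact ⟨by linarith, by linarith⟩
    · rw [hTw, hT'u]
      linear_combination hs1 - hs2
  · have hs1 := lsum2_ne le1 le2 lam ℓ hpos hsum hcase ha
    have hs2 := lsum2_ne le2 le1 lam ℓ hpos hsum (ARcase_symm hcase) ha
    have hml : lam ℓ * lam2 lam ℓ a = lam a := by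
      unfold lam2; rw [if_neg ha]; field_simp
    have hG1 := Gbound le1 le2 lam ℓ hpos hsum hcase hl a ha
    have hG2 := Gbound le2 le1 lam ℓ hpos hsum (ARcase_symm hcase) hl a ha
    rw [hs2, hml] at hmu2
    rw [hs2] at hmu1
    have hwJ : lam ℓ * u + lsum le1 lam ℓ ∈ Ival le2 lam a :=
      ⟨by linarith, by linarith⟩
    have hTw := Tmap_eq le2 le1 lam hpos hwJ
    have hTwI : Tmap le2 le1 lam (lam ℓ * u + lsum le1 lam ℓ) ∈ Ival le1 lam a := by
      rw [hTw]
      exact ⟨by linarith, by linarith⟩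
    have hTwJℓ : Tmap le2 le1 lam (lam ℓ * u + lsum le1 lam ℓ) ∈ Ival le2 lam ℓ := by
      rw [hTw]
      exact ⟨by linarith [hG1.1], by linarith [hG1.2]⟩
    have hTTw := Tmap_eq le2 le1 lam hpos hTwJℓ
    refine ⟨fun h => absurd h ha, fun _ => ⟨hwJ, hTwI, ?_⟩⟩
    rw [hTTw, hTw, hT'u]
    linear_combination hs1 - hs2

/-- Forward step lemma for the `R` case (conjugation via `ψ u = lam ℓ * u + lsum le2 lam ℓ`). -/
lemma stepB (hpos : ∀ a, 0 < lam a) (hsum : ∑ a, lam a = 1) (hcase : ARcase le1 le2 ℓ)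
    (hl : 1 - lam ℓ < lam ℓ) {u : ℝ} {a : A} (hu : u ∈ Ival le1 (lam2 lam ℓ) a) :
    lam ℓ * u + lsum le2 lam ℓ ∈ Ival le1 lam a ∧
    (a = ℓ → lam ℓ * Tmap le1 le2 (lam2 lam ℓ) u + lsum le2 lam ℓ =
        Tmap le1 le2 lam (lam ℓ * u + lsum le2 lam ℓ)) ∧
    (a ≠ ℓ → Tmap le1 le2 lam (lam ℓ * u + lsum le2 lam ℓ) ∈ Ival le1 lam ℓ ∧
      lam ℓ * Tmap le1 le2 (lam2 lam ℓ) u + lsum le2 lam ℓ =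
        Tmap le1 le2 lam (Tmap le1 le2 lam (lam ℓ * u + lsum le2 lam ℓ))) := by
  have hpos2 := lam2_pos lam ℓ hpos hl
  have hpq := pq_eq le1 le2 lam ℓ hsum hcase
  have hp0 : 0 ≤ lsum le1 lam ℓ := lsum_nonneg le1 lam hpos ℓ
  have hq0 : 0 ≤ lsum le2 lam ℓ := lsum_nonneg le2 lam hpos ℓ
  have hpq' : lsum le1 lam ℓ + lsum le2 lam ℓ = 1 - lam ℓ := by
    rcases hpq with ⟨h1, h2⟩ | ⟨h1, h2⟩ <;> rw [h1, h2] <;> ring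
  have hT'u : Tmap le1 le2 (lam2 lam ℓ) u =
      u - lsum le1 (lam2 lam ℓ) a + lsum le2 (lam2 lam ℓ) a := Tmap_eq le1 le2 _ hpos2 hu
  have hlℓ := hpos ℓ
  obtain ⟨hu1, hu2⟩ := hu
  have hmu1 : lam ℓ * lsum le1 (lam2 lam ℓ) a ≤ lam ℓ * u :=
    mul_le_mul_of_nonneg_left hu1 hlℓ.le
  have hmu2 : lam ℓ * u < lam ℓ * lsum le1 (lam2 lam ℓ) a + lam ℓ * lam2 lam ℓ a := by
    have := (mul_lt_mul_iff_right₀ hlℓ).2 hu2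
    rw [mul_add] at this
    exact this
  by_cases ha : a = ℓ
  · subst ha
    have hs1 := lsum2_self le1 le2 lam a hpos hsum hcase
    have hs2 := lsum2_self le2 le1 lam a hpos hsum (ARcase_symm hcase)
    have hml : lam a * lam2 lam a a = 2 * lam a - 1 := by
      unfold lam2; rw [if_pos rfl]; field_simp
    rw [hs1, hml] at hmu2
    rw [hs1] at hmu1
    have hwI : lam a * u + lsum le2 lam a ∈ Ival le1 lam a :=
      ⟨by linarith, by linarith⟩
    have hTw := Tmap_eq le1 le2 lam hpos hwI
    refine ⟨hwI, fun _ => ?_, fun hne => absurd rfl hne⟩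
    rw [hTw, hT'u]
    linear_combination hs2 - hs1
  · have hs1 := lsum2_ne le1 le2 lam ℓ hpos hsum hcase ha
    have hs2 := lsum2_ne le2 le1 lam ℓ hpos hsum (ARcase_symm hcase) ha
    have hml : lam ℓ * lam2 lam ℓ a = lam a := by
      unfold lam2; rw [if_neg ha]; field_simp
    have hG1 := Gbound le1 le2 lam ℓ hpos hsum hcase hl a ha
    have hG2 := Gbound le2 le1 lam ℓ hpos hsum (ARcase_symm hcase) hl a ha
    rw [hs1, hml] at hmu2
    rw [hs1] at hmu1
    have hwI : lam ℓ * u + lsum le2 lam ℓ ∈ Ival le1 lam a :=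
      ⟨by linarith, by linarith⟩
    have hTw := Tmap_eq le1 le2 lam hpos hwI
    have hTwIℓ : Tmap le1 le2 lam (lam ℓ * u + lsum le2 lam ℓ) ∈ Ival le1 lam ℓ := by
      rw [hTw]
      exact ⟨by linarith [hG2.1], by linarith [hG2.2]⟩
    have hTTw := Tmap_eq le1 le2 lam hpos hTwIℓ
    refine ⟨hwI, fun h => absurd h ha, fun _ => ⟨hTwIℓ, ?_⟩⟩
    rw [hTTw, hTw, hT'u]
    linear_combination hs2 - hs1

/-- Backward step lemma for the `R` case. -/
lemma stepB' (hpos : ∀ a, 0 < lam a) (hsum : ∑ a, lam a = 1) (hcase : ARcase le1 le2 ℓ)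
    (hl : 1 - lam ℓ < lam ℓ) {u : ℝ} {a : A} (hu : u ∈ Ival le2 (lam2 lam ℓ) a) :
    lam ℓ * u + lsum le2 lam ℓ ∈ Ival le2 lam ℓ ∧
    (a = ℓ → Tmap le2 le1 lam (lam ℓ * u + lsum le2 lam ℓ) ∈ Ival le2 lam ℓ ∧
      lam ℓ * Tmap le2 le1 (lam2 lam ℓ) u + lsum le2 lam ℓ =
        Tmap le2 le1 lam (lam ℓ * u + lsum le2 lam ℓ)) ∧
    (a ≠ ℓ → Tmap le2 le1 lam (lam ℓ * u + lsum le2 lam ℓ) ∈ Ival le2 lam a ∧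
      lam ℓ * Tmap le2 le1 (lam2 lam ℓ) u + lsum le2 lam ℓ =
        Tmap le2 le1 lam (Tmap le2 le1 lam (lam ℓ * u + lsum le2 lam ℓ))) := by
  have hpos2 := lam2_pos lam ℓ hpos hl
  have hpq := pq_eq le1 le2 lam ℓ hsum hcase
  have hp0 : 0 ≤ lsum le1 lam ℓ := lsum_nonneg le1 lam hpos ℓ
  have hq0 : 0 ≤ lsum le2 lam ℓ := lsum_nonneg le2 lam hpos ℓ
  have hpq' : lsum le1 lam ℓ + lsum le2 lam ℓ = 1 - lam ℓ := by
    rcases hpq with ⟨h1, h2⟩ | ⟨h1, h2⟩ <;> rw [h1, h2] <;> ring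
  have hT'u : Tmap le2 le1 (lam2 lam ℓ) u =
      u - lsum le2 (lam2 lam ℓ) a + lsum le1 (lam2 lam ℓ) a := Tmap_eq le2 le1 _ hpos2 hu
  have hlℓ := hpos ℓ
  obtain ⟨hu1, hu2⟩ := hu
  have hmu1 : lam ℓ * lsum le2 (lam2 lam ℓ) a ≤ lam ℓ * u :=
    mul_le_mul_of_nonneg_left hu1 hlℓ.le
  have hmu2 : lam ℓ * u < lam ℓ * lsum le2 (lam2 lam ℓ) a + lam ℓ * lam2 lam ℓ a := by
    have := (mul_lt_mul_iff_right₀ hlℓ).2 hu2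
    rw [mul_add] at this
    exact this
  by_cases ha : a = ℓ
  · subst ha
    have hs1 := lsum2_self le1 le2 lam a hpos hsum hcase
    have hs2 := lsum2_self le2 le1 lam a hpos hsum (ARcase_symm hcase)
    have hml : lam a * lam2 lam a a = 2 * lam a - 1 := by
      unfold lam2; rw [if_pos rfl]; field_simp
    rw [hs2, hml] at hmu2
    rw [hs2] at hmu1
    have hwJ : lam a * u + lsum le2 lam a ∈ Ival le2 lam a :=
      ⟨by linarith, by linarith⟩
    have hTw := Tmap_eq le2 le1 lam hpos hwJ
    refine ⟨hwJ, fun _ => ⟨?_, ?_⟩, fun hne => absurd rfl hne⟩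
    · rw [hTw]
      exact ⟨by linarith, by linarith⟩
    · rw [hTw, hT'u]
      linear_combination hs1 - hs2
  · have hs1 := lsum2_ne le1 le2 lam ℓ hpos hsum hcase ha
    have hs2 := lsum2_ne le2 le1 lam ℓ hpos hsum (ARcase_symm hcase) ha
    have hml : lam ℓ * lam2 lam ℓ a = lam a := by
      unfold lam2; rw [if_neg ha]; field_simp
    have hG1 := Gbound le1 le2 lam ℓ hpos hsum hcase hl a ha
    have hG2 := Gbound le2 le1 lam ℓ hpos hsum (ARcase_symm hcase) hl a ha
    rw [hs2, hml] at hmu2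
    rw [hs2] at hmu1
    have hwJℓ : lam ℓ * u + lsum le2 lam ℓ ∈ Ival le2 lam ℓ :=
      ⟨by linarith [hG2.1], by linarith [hG2.2]⟩
    have hTw := Tmap_eq le2 le1 lam hpos hwJℓ
    have hTwJ : Tmap le2 le1 lam (lam ℓ * u + lsum le2 lam ℓ) ∈ Ival le2 lam a := by
      rw [hTw]
      exact ⟨by linarith, by linarith⟩
    have hTTw := Tmap_eq le2 le1 lam hpos hTwJ
    refine ⟨hwJℓ, fun h => absurd h ha, fun _ => ⟨hTwJ, ?_⟩⟩
    rw [hTTw, hTw, hT'u]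
    linear_combination hs1 - hs2

end Part5
section Part6

variable {A : Type*} [Fintype A] [DecidableEq A] (le1 le2 : LinearOrder A) (lam : A → ℝ) (ℓ : A)

lemma TmapZ_neg_one (w : ℝ) : TmapZ le1 le2 lam (-1) w = Tmap le2 le1 lam w := by
  rw [TmapZ, if_neg (by omega)]
  norm_num

lemma phi_mem (hpos : ∀ a, 0 < lam a) (hsum : ∑ a, lam a = 1) (hcase : ARcase le1 le2 ℓ)
    (hl : 1 - lam ℓ < lam ℓ) {v : ℝ} (hv : v ∈ Set.Ico (0:ℝ) 1) :
    lam ℓ * v + lsum le1 lam ℓ ∈ Ival le1 lam ℓ := by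
  obtain ⟨c, hc⟩ := exists_mem_Ival le1 (lam2 lam ℓ) (lam2_pos lam ℓ hpos hl)
    (lam2_sum lam ℓ hpos hsum) hv
  exact (stepA le1 le2 lam ℓ hpos hsum hcase hl hc).1

lemma orbmap (hpos : ∀ a, 0 < lam a) (hsum : ∑ a, lam a = 1) (hcase : ARcase le1 le2 ℓ)
    (hl : 1 - lam ℓ < lam ℓ) (n : ℤ) {u : ℝ} (hu : u ∈ Set.Ico (0:ℝ) 1) :
    ∃ k : ℤ, (0 ≤ n → n ≤ k) ∧
      lam ℓ * TmapZ le1 le2 (lam2 lam ℓ) n u + lsum le1 lam ℓ =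
        TmapZ le1 le2 lam k (lam ℓ * u + lsum le1 lam ℓ) := by
  have hpos2 := lam2_pos lam ℓ hpos hl
  have hsum2 := lam2_sum lam ℓ hpos hsum
  have hw0 : lam ℓ * u + lsum le1 lam ℓ ∈ Set.Ico (0:ℝ) 1 :=
    Ival_subset le1 lam hpos hsum ℓ (phi_mem le1 le2 lam ℓ hpos hsum hcase hl hu)
  induction n using Int.induction_on with
  | zero => exact ⟨0, fun _ => le_refl 0, by rw [TmapZ_zero, TmapZ_zero]⟩
  | succ m ih =>
      obtain ⟨k, hk, heq⟩ := ih
      set v := TmapZ le1 le2 (lam2 lam ℓ) (m : ℤ) u with hv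
      have hv01 : v ∈ Set.Ico (0:ℝ) 1 := TmapZ_mem01 le1 le2 _ hpos2 hsum2 m hu
      obtain ⟨c, hc⟩ := exists_mem_Ival le1 (lam2 lam ℓ) hpos2 hsum2 hv01
      have hstep := stepA le1 le2 lam ℓ hpos hsum hcase hl hc
      have hsucc : TmapZ le1 le2 (lam2 lam ℓ) ((m : ℤ) + 1) u = Tmap le1 le2 (lam2 lam ℓ) v :=
        TmapZ_succ le1 le2 _ hpos2 hsum2 m hu
      by_cases hcℓ : c = ℓ
      · obtain ⟨_, heq2⟩ := hstep.2.1 hcℓ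
        refine ⟨k + 1, fun _ => by have := hk (by positivity); omega, ?_⟩
        rw [hsucc, heq2, heq, ← TmapZ_succ le1 le2 lam hpos hsum k hw0]
      · obtain ⟨_, heq2⟩ := hstep.2.2 hcℓ
        refine ⟨k + 2, fun _ => by have := hk (by positivity); omega, ?_⟩
        rw [hsucc, heq2, heq, ← TmapZ_succ le1 le2 lam hpos hsum k hw0,
          ← TmapZ_succ le1 le2 lam hpos hsum (k+1) hw0]
        ring_nf
  | pred m ih =>
      obtain ⟨k, _, heq⟩ := ih
      set v := TmapZ le1 le2 (lam2 lam ℓ) (-(m : ℤ)) u with hv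
      have hv01 : v ∈ Set.Ico (0:ℝ) 1 := TmapZ_mem01 le1 le2 _ hpos2 hsum2 _ hu
      obtain ⟨c, hc⟩ := exists_mem_Ival le2 (lam2 lam ℓ) hpos2 hsum2 hv01
      have hstep := stepA' le1 le2 lam ℓ hpos hsum hcase hl hc
      have hpred : TmapZ le1 le2 (lam2 lam ℓ) (-(m : ℤ) - 1) u = Tmap le2 le1 (lam2 lam ℓ) v :=
        TmapZ_pred le1 le2 _ hpos2 hsum2 _ hu
      by_cases hcℓ : c = ℓ
      · obtain ⟨_, _, heq2⟩ := hstep.1 hcℓ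
        refine ⟨k - 1, fun h => absurd h (by omega), ?_⟩
        rw [hpred, heq2, heq, ← TmapZ_pred le1 le2 lam hpos hsum k hw0]
      · obtain ⟨_, _, heq2⟩ := hstep.2 hcℓ
        refine ⟨k - 2, fun h => absurd h (by omega), ?_⟩
        rw [hpred, heq2, heq, ← TmapZ_pred le1 le2 lam hpos hsum k hw0,
          ← TmapZ_pred le1 le2 lam hpos hsum (k-1) hw0]
        ring_nf

lemma lam_lt_one (hcard : 2 ≤ Fintype.card A) (hpos : ∀ a, 0 < lam a)
    (hsum : ∑ a, lam a = 1) : lam ℓ < 1 := by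
  obtain ⟨a, hane⟩ := Fintype.exists_ne_of_one_lt_card (by omega) ℓ
  have hsub : ({ℓ, a} : Finset A) ⊆ Finset.univ := fun b _ => Finset.mem_univ b
  have h1 : lam ℓ + lam a ≤ 1 := by
    rw [← hsum, ← Finset.sum_pair (Ne.symm hane)]
    exact Finset.sum_le_sum_of_subset_of_nonneg hsub (fun b _ _ => (hpos b).le)
  linarith [hpos a]

lemma endpoint (hcard : 2 ≤ Fintype.card A) (hpos : ∀ a, 0 < lam a) (hsum : ∑ a, lam a = 1)
    (hcase : ARcase le1 le2 ℓ) (hl : 1 - lam ℓ < lam ℓ) {a : A}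
    (hne0 : lsum le1 (lam2 lam ℓ) a ≠ 0) :
    lsum le1 lam a ≠ 0 ∧ lsum le1 lam a ∈ Set.Ico (0:ℝ) 1 ∧
      lam ℓ * lsum le1 (lam2 lam ℓ) a + lsum le1 lam ℓ =
        Tmap le2 le1 lam (lsum le1 lam a) := by
  have hlℓ := hpos ℓ
  have hmem01 : lsum le1 lam a ∈ Set.Ico (0:ℝ) 1 :=
    Ival_subset le1 lam hpos hsum a (lsum_mem_Ival le1 lam hpos a)
  by_cases ha : a = ℓ
  · subst ha
    rcases hcase with ⟨h1, h2⟩ | ⟨h1, h2⟩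
    · exact absurd (lsum_lam2_min_self le1 lam a h1) hne0
    · have hp : lsum le1 lam a = 1 - lam a := by linarith [lsum_top le1 lam hsum h1]
      have hq : lsum le2 lam a = 0 := lsum_bot le2 lam h2
      have h1lt := lam_lt_one lam a hcard hpos hsum
      have hpJ : lsum le1 lam a ∈ Ival le2 lam a := by
        rw [Ival, hq, hp]
        exact ⟨by linarith, by linarith⟩
      have hTp := Tmap_eq le2 le1 lam hpos hpJ
      refine ⟨by rw [hp]; linarith, hmem01, ?_⟩
      rw [hTp, hq, lsum_lam2_max_self le1 lam a hpos hsum h1, hp]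
      ring
  · have hs1 := lsum2_ne le1 le2 lam ℓ hpos hsum hcase ha
    have hG1 := Gbound le1 le2 lam ℓ hpos hsum hcase hl a ha
    have hne0' : lsum le1 lam a - lsum le2 lam ℓ ≠ 0 := by
      rw [← hs1]
      exact mul_ne_zero hlℓ.ne' hne0
    have hq0 : 0 ≤ lsum le2 lam ℓ := lsum_nonneg le2 lam hpos ℓ
    have hJ : lsum le1 lam a ∈ Ival le2 lam ℓ := by
      refine ⟨hG1.1, ?_⟩
      have := hpos a
      linarith [hG1.2]
    have hTp := Tmap_eq le2 le1 lam hpos hJ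
    refine ⟨?_, hmem01, by rw [hTp, hs1]⟩
    intro h0
    rw [h0] at hne0' hG1
    have : lsum le2 lam ℓ = 0 := le_antisymm (by linarith [hG1.1]) hq0
    rw [this] at hne0'
    norm_num at hne0'

lemma orb_phi (hpos : ∀ a, 0 < lam a) (hsum : ∑ a, lam a = 1) (hcard : 2 ≤ Fintype.card A)
    (hcase : ARcase le1 le2 ℓ) (hl : 1 - lam ℓ < lam ℓ) {a : A}
    (hne0 : lsum le1 (lam2 lam ℓ) a ≠ 0) {w : ℝ}
    (hw : w ∈ orbitIET le1 le2 (lam2 lam ℓ) (lsum le1 (lam2 lam ℓ) a)) :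
    lam ℓ * w + lsum le1 lam ℓ ∈ orbitIET le1 le2 lam (lsum le1 lam a) := by
  have hpos2 := lam2_pos lam ℓ hpos hl
  have hsum2 := lam2_sum lam ℓ hpos hsum
  obtain ⟨n, rfl⟩ := hw
  obtain ⟨h0, hmem01, heq⟩ := endpoint le1 le2 lam ℓ hcard hpos hsum hcase hl hne0
  have he' : lsum le1 (lam2 lam ℓ) a ∈ Set.Ico (0:ℝ) 1 :=
    Ival_subset le1 (lam2 lam ℓ) hpos2 hsum2 a (lsum_mem_Ival le1 (lam2 lam ℓ) hpos2 a)
  obtain ⟨k, _, hk⟩ := orbmap le1 le2 lam ℓ hpos hsum hcase hl n he'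
  refine ⟨k - 1, ?_⟩
  rw [hk, heq, ← TmapZ_neg_one le1 le2 lam, ← TmapZ_add le1 le2 lam hpos hsum k (-1) hmem01]
  ring_nf

lemma RIET2 (hcard : 2 ≤ Fintype.card A) (hRIET : IsRIET le1 le2 lam)
    (hcase : ARcase le1 le2 ℓ) (hl : 1 - lam ℓ < lam ℓ) :
    IsRIET le1 le2 (lam2 lam ℓ) := by
  obtain ⟨hpos, hsum, hinf, hdisj⟩ := hRIET
  have hpos2 := lam2_pos lam ℓ hpos hl
  have hsum2 := lam2_sum lam ℓ hpos hsum
  refine ⟨hpos2, hsum2, ?_, ?_⟩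
  · intro a hne0
    obtain ⟨h0, hmem01, heqv⟩ := endpoint le1 le2 lam ℓ hcard hpos hsum hcase hl hne0
    have he' : lsum le1 (lam2 lam ℓ) a ∈ Set.Ico (0:ℝ) 1 :=
      Ival_subset le1 (lam2 lam ℓ) hpos2 hsum2 a (lsum_mem_Ival le1 (lam2 lam ℓ) hpos2 a)
    have hrange : orbitIET le1 le2 (lam2 lam ℓ) (lsum le1 (lam2 lam ℓ) a) =
        Set.range (fun n : ℤ => TmapZ le1 le2 (lam2 lam ℓ) n (lsum le1 (lam2 lam ℓ) a)) :=
      Set.ext fun w => ⟨fun ⟨n, h⟩ => ⟨n, h.symm⟩, fun ⟨n, h⟩ => ⟨n, h.symm⟩⟩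
    rw [hrange]
    apply Set.infinite_range_of_injective
    have key : ∀ m n : ℤ, m < n →
        TmapZ le1 le2 (lam2 lam ℓ) m (lsum le1 (lam2 lam ℓ) a) =
          TmapZ le1 le2 (lam2 lam ℓ) n (lsum le1 (lam2 lam ℓ) a) → False := by
      intro m n hmn hper
      set v := TmapZ le1 le2 (lam2 lam ℓ) m (lsum le1 (lam2 lam ℓ) a) with hvdef
      have hv01 : v ∈ Set.Ico (0:ℝ) 1 := TmapZ_mem01 le1 le2 _ hpos2 hsum2 m he'
      have hperv : TmapZ le1 le2 (lam2 lam ℓ) (n - m) v = v := by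
        rw [hvdef, ← TmapZ_add le1 le2 (lam2 lam ℓ) hpos2 hsum2 (n - m) m he']
        have : n - m + m = n := by ring
        rw [this, ← hper]
      obtain ⟨k, hkb, hkeq⟩ := orbmap le1 le2 lam ℓ hpos hsum hcase hl (n - m) hv01
      rw [hperv] at hkeq
      have hk1 : 1 ≤ k := le_trans (by omega) (hkb (by omega))
      have hphiv01 : lam ℓ * v + lsum le1 lam ℓ ∈ Set.Ico (0:ℝ) 1 :=
        Ival_subset le1 lam hpos hsum ℓ (phi_mem le1 le2 lam ℓ hpos hsum hcase hl hv01)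
      have hfin := orbit_finite_of_periodic le1 le2 lam hpos hsum hk1 hphiv01 hkeq.symm
      -- lam ℓ * v + p lies in the orbit of lsum le1 lam a, so the latter orbit is finite
      have hvorb : lam ℓ * v + lsum le1 lam ℓ ∈ orbitIET le1 le2 lam (lsum le1 lam a) :=
        orb_phi le1 le2 lam ℓ hpos hsum hcard hcase hl hne0 ⟨m, hvdef⟩
      obtain ⟨j, hj⟩ := hvorb
      have hsub : orbitIET le1 le2 lam (lsum le1 lam a) ⊆
          orbitIET le1 le2 lam (lam ℓ * v + lsum le1 lam ℓ) := by
        rintro w ⟨i, rfl⟩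
        refine ⟨i - j, ?_⟩
        rw [hj, ← TmapZ_add le1 le2 lam hpos hsum (i - j) j hmem01]
        have : i - j + j = i := by ring
        rw [this]
      exact hinf a h0 (hfin.subset hsub)
    intro m n hmn
    by_contra hne
    rcases lt_or_gt_of_ne hne with h | h
    · exact key m n h hmn
    · exact key n m h hmn.symm
  · intro a b hab ha0 hb0
    obtain ⟨ha0', _, _⟩ := endpoint le1 le2 lam ℓ hcard hpos hsum hcase hl ha0
    obtain ⟨hb0', _, _⟩ := endpoint le1 le2 lam ℓ hcard hpos hsum hcase hl hb0
    rw [Set.disjoint_left]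
    intro w hwa hwb
    have h1 := orb_phi le1 le2 lam ℓ hpos hsum hcard hcase hl ha0 hwa
    have h2 := orb_phi le1 le2 lam ℓ hpos hsum hcard hcase hl hb0 hwb
    exact Set.disjoint_left.mp (hdisj a b hab ha0' hb0') h1 h2

end Part6
section Part7

variable {A : Type*} [Fintype A] [DecidableEq A] (le1 le2 : LinearOrder A) (lam : A → ℝ) (ℓ : A)

lemma codingL (hcard : 2 ≤ Fintype.card A) {lam : A → ℝ} {z : ℝ} (hRIET : IsRIET le1 le2 lam)
    {x y : ℤ → A} (hx : Function.Surjective x) (himg : IsImage (ARL ℓ) x y)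
    (hz01 : z ∈ Set.Ico (0:ℝ) 1) (hcode : IsNaturalCoding le1 le2 lam z y) :
    ∃ (lam' : A → ℝ) (z' : ℝ), IsRIET le1 le2 lam' ∧ z' ∈ Set.Ico (0 : ℝ) 1 ∧
      IsNaturalCoding le1 le2 lam' z' x := by
  obtain ⟨t, ht0, hlen, hval⟩ := himg
  obtain ⟨hpos, hsum, hinf, hdisj⟩ := hRIET
  have hlℓ := hpos ℓ
  have hval' : ∀ (n : ℤ) (w : List A), ARL ℓ (x n) = w →
      ∀ j : Fin w.length, y (t n + (j : ℕ)) = w.get j := by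
    intro n w hw
    subst hw
    exact hval n
  have hfirst : ∀ n, y (t n) = ℓ := by
    intro n
    by_cases h : x n = ℓ
    · have := hval' n [ℓ] (by simp [ARL, h]) ⟨0, by simp⟩
      simpa using this
    · have := hval' n [ℓ, x n] (by simp [ARL, h]) ⟨0, by simp⟩
      simpa using this
  have hlen1 : ∀ n, x n = ℓ → t (n + 1) = t n + 1 := by
    intro n h
    rw [hlen n]
    simp [ARL, h]
  have hlen2 : ∀ n, x n ≠ ℓ → t (n + 1) = t n + 2 := by
    intro n h
    rw [hlen n]
    simp [ARL, h]
  have hsecond : ∀ n, x n ≠ ℓ → y (t n + 1) = x n := by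
    intro n h
    have := hval' n [ℓ, x n] (by simp [ARL, h]) ⟨1, by simp⟩
    simpa using this
  -- the orbit facts
  have hO1 : ∀ a, a ≠ ℓ → (Ival le1 lam a ∩ Ival le2 lam ℓ).Nonempty := by
    intro a ha
    obtain ⟨n, hn⟩ := hx a
    have hxn : x n ≠ ℓ := by rw [hn]; exact ha
    refine ⟨TmapZ le1 le2 lam (t n + 1) z, ?_, ?_⟩
    · have h := hcode (t n + 1)
      rwa [hsecond n hxn, hn] at h
    · have h := hcode (t n)
      rw [hfirst n] at h
      have h2 := Tmap_mem le1 le2 lam hpos h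
      rwa [← TmapZ_succ le1 le2 lam hpos hsum (t n) hz01] at h2
  have hO1' : ∀ a, a ≠ ℓ → (Ival le2 lam a ∩ Ival le1 lam ℓ).Nonempty := by
    intro a ha
    obtain ⟨n, hn⟩ := hx a
    have hxn : x n ≠ ℓ := by rw [hn]; exact ha
    refine ⟨TmapZ le1 le2 lam (t n + 2) z, ?_, ?_⟩
    · have h := hcode (t n + 1)
      rw [hsecond n hxn, hn] at h
      have h2 := Tmap_mem le1 le2 lam hpos h
      rwa [← TmapZ_succ le1 le2 lam hpos hsum (t n + 1) hz01,
        show t n + 1 + 1 = t n + 2 by ring] at h2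
    · have h := hcode (t (n + 1))
      rw [hfirst (n + 1)] at h
      rwa [hlen2 n hxn] at h
  have hO2 : (Ival le1 lam ℓ ∩ Ival le2 lam ℓ).Nonempty := by
    obtain ⟨n, hn⟩ := hx ℓ
    refine ⟨TmapZ le1 le2 lam (t n + 1) z, ?_, ?_⟩
    · have h := hcode (t (n + 1))
      rw [hfirst (n + 1)] at h
      rwa [hlen1 n hn] at h
    · have h := hcode (t n)
      rw [hfirst n] at h
      have h2 := Tmap_mem le1 le2 lam hpos h
      rwa [← TmapZ_succ le1 le2 lam hpos hsum (t n) hz01] at h2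
  obtain ⟨hcase, hl⟩ := geo le1 le2 lam ℓ hcard hpos hsum hO1 hO1' hO2
  have hpos2 := lam2_pos lam ℓ hpos hl
  have hsum2 := lam2_sum lam ℓ hpos hsum
  -- the starting point
  have hy0 : y 0 = ℓ := by have := hfirst 0; rwa [ht0] at this
  have hzI : z ∈ Ival le1 lam ℓ := by
    have h := hcode 0
    rwa [TmapZ_zero, hy0] at h
  set z' : ℝ := (z - lsum le1 lam ℓ) / lam ℓ with hz'def
  have hphiz : lam ℓ * z' + lsum le1 lam ℓ = z := by
    rw [hz'def]
    field_simp
    ring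
  have hz'01 : z' ∈ Set.Ico (0:ℝ) 1 := by
    obtain ⟨h1, h2⟩ := hzI
    constructor
    · apply div_nonneg (by linarith) hlℓ.le
    · rw [div_lt_one hlℓ]
      linarith
  -- main conjugacy along the orbit
  have MAIN : ∀ n : ℤ, lam ℓ * TmapZ le1 le2 (lam2 lam ℓ) n z' + lsum le1 lam ℓ =
      TmapZ le1 le2 lam (t n) z := by
    intro n
    induction n using Int.induction_on with
    | zero => rw [TmapZ_zero, hphiz, ht0, TmapZ_zero]
    | succ m ih =>
        have hv01 : TmapZ le1 le2 (lam2 lam ℓ) (m : ℤ) z' ∈ Set.Ico (0:ℝ) 1 :=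
          TmapZ_mem01 le1 le2 _ hpos2 hsum2 _ hz'01
        obtain ⟨c, hc⟩ := exists_mem_Ival le1 (lam2 lam ℓ) hpos2 hsum2 hv01
        have hstep := stepA le1 le2 lam ℓ hpos hsum hcase hl hc
        rw [ih] at hstep
        have hTw : Tmap le1 le2 lam (TmapZ le1 le2 lam (t (m : ℤ)) z) =
            TmapZ le1 le2 lam (t (m : ℤ) + 1) z :=
          (TmapZ_succ le1 le2 lam hpos hsum (t (m : ℤ)) hz01).symm
        have hcodem := hcode (t (m : ℤ) + 1)
        have hsucc' : TmapZ le1 le2 (lam2 lam ℓ) ((m : ℤ) + 1) z' =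
            Tmap le1 le2 (lam2 lam ℓ) (TmapZ le1 le2 (lam2 lam ℓ) (m : ℤ) z') :=
          TmapZ_succ le1 le2 _ hpos2 hsum2 _ hz'01
        by_cases hxm : x (m : ℤ) = ℓ
        · have hyℓ : y (t (m : ℤ) + 1) = ℓ := by
            rw [← hlen1 (m : ℤ) hxm]
            exact hfirst _
          rw [hyℓ] at hcodem
          have hcℓ : c = ℓ := by
            by_contra hcne
            obtain ⟨hmem, _⟩ := hstep.2.2 hcne
            rw [hTw] at hmem
            exact hcne (Ival_unique le1 lam hpos hmem hcodem)
          obtain ⟨_, heq2⟩ := hstep.2.1 hcℓ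
          rw [hsucc', heq2, hTw, hlen1 (m : ℤ) hxm]
        · have hya : y (t (m : ℤ) + 1) = x (m : ℤ) := hsecond _ hxm
          rw [hya] at hcodem
          have hcx : c = x (m : ℤ) := by
            by_cases hcℓ : c = ℓ
            · obtain ⟨hmem, _⟩ := hstep.2.1 hcℓ
              rw [hTw] at hmem
              exact absurd (Ival_unique le1 lam hpos hcodem hmem) hxm
            · obtain ⟨hmem, _⟩ := hstep.2.2 hcℓ
              rw [hTw] at hmem
              exact Ival_unique le1 lam hpos hmem hcodem
          have hcne : c ≠ ℓ := by rw [hcx]; exact hxm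
          obtain ⟨_, heq2⟩ := hstep.2.2 hcne
          rw [hsucc', heq2, hTw, ← TmapZ_succ le1 le2 lam hpos hsum (t (m : ℤ) + 1) hz01,
            hlen2 (m : ℤ) hxm, show t (m : ℤ) + 1 + 1 = t (m : ℤ) + 2 by ring]
    | pred m ih =>
        have hv01 : TmapZ le1 le2 (lam2 lam ℓ) (-(m : ℤ)) z' ∈ Set.Ico (0:ℝ) 1 :=
          TmapZ_mem01 le1 le2 _ hpos2 hsum2 _ hz'01
        obtain ⟨c, hc⟩ := exists_mem_Ival le2 (lam2 lam ℓ) hpos2 hsum2 hv01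
        have hstep := stepA' le1 le2 lam ℓ hpos hsum hcase hl hc
        rw [ih] at hstep
        have hTw : Tmap le2 le1 lam (TmapZ le1 le2 lam (t (-(m : ℤ))) z) =
            TmapZ le1 le2 lam (t (-(m : ℤ)) - 1) z :=
          (TmapZ_pred le1 le2 lam hpos hsum (t (-(m : ℤ))) hz01).symm
        have hpred' : TmapZ le1 le2 (lam2 lam ℓ) (-(m : ℤ) - 1) z' =
            Tmap le2 le1 (lam2 lam ℓ) (TmapZ le1 le2 (lam2 lam ℓ) (-(m : ℤ)) z') :=
          TmapZ_pred le1 le2 _ hpos2 hsum2 _ hz'01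
        by_cases hxm : x (-(m : ℤ) - 1) = ℓ
        · have hts : t (-(m : ℤ)) = t (-(m : ℤ) - 1) + 1 := by
            have h' := hlen1 (-(m : ℤ) - 1) hxm
            rwa [show -(m : ℤ) - 1 + 1 = -(m : ℤ) by ring] at h'
          have hcodem := hcode (t (-(m : ℤ) - 1))
          rw [hfirst _] at hcodem
          have hback : TmapZ le1 le2 lam (t (-(m : ℤ)) - 1) z =
              TmapZ le1 le2 lam (t (-(m : ℤ) - 1)) z := by
            rw [hts]
            ring_nf
          have hcℓ : c = ℓ := by
            by_contra hcne
            obtain ⟨_, hmem, _⟩ := hstep.2 hcne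
            rw [hTw, hback] at hmem
            exact hcne (Ival_unique le1 lam hpos hmem hcodem)
          obtain ⟨_, _, heq2⟩ := hstep.1 hcℓ
          rw [hpred', heq2, hTw, hback]
        · have hts : t (-(m : ℤ)) = t (-(m : ℤ) - 1) + 2 := by
            have h' := hlen2 (-(m : ℤ) - 1) hxm
            rwa [show -(m : ℤ) - 1 + 1 = -(m : ℤ) by ring] at h'
          have hcodem := hcode (t (-(m : ℤ) - 1) + 1)
          rw [hsecond _ hxm] at hcodem
          have hback : TmapZ le1 le2 lam (t (-(m : ℤ)) - 1) z =
              TmapZ le1 le2 lam (t (-(m : ℤ) - 1) + 1) z := by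
            rw [hts]
            ring_nf
          have hcx : c = x (-(m : ℤ) - 1) := by
            by_cases hcℓ : c = ℓ
            · obtain ⟨_, hmem, _⟩ := hstep.1 hcℓ
              rw [hTw, hback] at hmem
              exact absurd (Ival_unique le1 lam hpos hcodem hmem) hxm
            · obtain ⟨_, hmem, _⟩ := hstep.2 hcℓ
              rw [hTw, hback] at hmem
              exact Ival_unique le1 lam hpos hmem hcodem
          have hcne : c ≠ ℓ := by rw [hcx]; exact hxm
          obtain ⟨_, _, heq2⟩ := hstep.2 hcne
          rw [hpred', heq2, hTw, hback,
            ← TmapZ_pred le1 le2 lam hpos hsum (t (-(m : ℤ) - 1) + 1) hz01,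
            show t (-(m : ℤ) - 1) + 1 - 1 = t (-(m : ℤ) - 1) by ring]
  refine ⟨lam2 lam ℓ, z', RIET2 le1 le2 lam ℓ hcard ⟨hpos, hsum, hinf, hdisj⟩ hcase hl,
    hz'01, ?_⟩
  intro n
  have hv01 : TmapZ le1 le2 (lam2 lam ℓ) n z' ∈ Set.Ico (0:ℝ) 1 :=
    TmapZ_mem01 le1 le2 _ hpos2 hsum2 _ hz'01
  obtain ⟨c, hc⟩ := exists_mem_Ival le1 (lam2 lam ℓ) hpos2 hsum2 hv01
  have hstep := stepA le1 le2 lam ℓ hpos hsum hcase hl hc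
  rw [MAIN n] at hstep
  have hTw : Tmap le1 le2 lam (TmapZ le1 le2 lam (t n) z) = TmapZ le1 le2 lam (t n + 1) z :=
    (TmapZ_succ le1 le2 lam hpos hsum (t n) hz01).symm
  have hcodem := hcode (t n + 1)
  by_cases hxm : x n = ℓ
  · have hyℓ : y (t n + 1) = ℓ := by rw [← hlen1 n hxm]; exact hfirst _
    rw [hyℓ] at hcodem
    have hcℓ : c = ℓ := by
      by_contra hcne
      obtain ⟨hmem, _⟩ := hstep.2.2 hcne
      rw [hTw] at hmem
      exact hcne (Ival_unique le1 lam hpos hmem hcodem)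
    subst hcℓ
    rw [hxm]
    exact hc
  · rw [hsecond n hxm] at hcodem
    have hcx : c = x n := by
      by_cases hcℓ : c = ℓ
      · obtain ⟨hmem, _⟩ := hstep.2.1 hcℓ
        rw [hTw] at hmem
        exact absurd (Ival_unique le1 lam hpos hcodem hmem) hxm
      · obtain ⟨hmem, _⟩ := hstep.2.2 hcℓ
        rw [hTw] at hmem
        exact Ival_unique le1 lam hpos hmem hcodem
    rw [← hcx]
    exact hc

end Part7
section Part8

variable {A : Type*} [Fintype A] [DecidableEq A] (le1 le2 : LinearOrder A) (ℓ : A)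

lemma codingR (hcard : 2 ≤ Fintype.card A) {lam : A → ℝ} {z : ℝ} (hRIET : IsRIET le1 le2 lam)
    {x y : ℤ → A} (hx : Function.Surjective x) (himg : IsImage (ARR ℓ) x y)
    (hz01 : z ∈ Set.Ico (0:ℝ) 1) (hcode : IsNaturalCoding le1 le2 lam z y) :
    ∃ (lam' : A → ℝ) (z' : ℝ), IsRIET le1 le2 lam' ∧ z' ∈ Set.Ico (0 : ℝ) 1 ∧
      IsNaturalCoding le1 le2 lam' z' x := by
  obtain ⟨t, ht0, hlen, hval⟩ := himg
  obtain ⟨hpos, hsum, hinf, hdisj⟩ := hRIET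
  have hlℓ := hpos ℓ
  have hval' : ∀ (n : ℤ) (w : List A), ARR ℓ (x n) = w →
      ∀ j : Fin w.length, y (t n + (j : ℕ)) = w.get j := by
    intro n w hw
    subst hw
    exact hval n
  have hfirst : ∀ n, y (t n) = x n := by
    intro n
    by_cases h : x n = ℓ
    · have := hval' n [ℓ] (by simp [ARR, h]) ⟨0, by simp⟩
      simpa [h] using this
    · have := hval' n [x n, ℓ] (by simp [ARR, h]) ⟨0, by simp⟩
      simpa using this
  have hlen1 : ∀ n, x n = ℓ → t (n + 1) = t n + 1 := by
    intro n h
    rw [hlen n]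
    simp [ARR, h]
  have hlen2 : ∀ n, x n ≠ ℓ → t (n + 1) = t n + 2 := by
    intro n h
    rw [hlen n]
    simp [ARR, h]
  have hsecond : ∀ n, x n ≠ ℓ → y (t n + 1) = ℓ := by
    intro n h
    have := hval' n [x n, ℓ] (by simp [ARR, h]) ⟨1, by simp⟩
    simpa using this
  have hlast : ∀ n, y (t n - 1) = ℓ := by
    intro n
    by_cases h : x (n - 1) = ℓ
    · have hts : t n = t (n - 1) + 1 := by
        have h' := hlen1 (n - 1) h
        rwa [show n - 1 + 1 = n by ring] at h'
      have h2 := hfirst (n - 1)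
      rw [h] at h2
      rw [hts, show t (n-1) + 1 - 1 = t (n-1) by ring]
      exact h2
    · have hts : t n = t (n - 1) + 2 := by
        have h' := hlen2 (n - 1) h
        rwa [show n - 1 + 1 = n by ring] at h'
      have h2 := hsecond (n - 1) h
      rw [hts, show t (n-1) + 2 - 1 = t (n-1) + 1 by ring]
      exact h2
  -- membership of orbit points in J-intervals of the previous letter
  have hJ : ∀ k : ℤ, TmapZ le1 le2 lam k z ∈ Ival le2 lam (y (k - 1)) := by
    intro k
    have h1 := Tmap_mem le1 le2 lam hpos (hcode (k - 1))
    rwa [← TmapZ_succ le1 le2 lam hpos hsum (k - 1) hz01,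
      show k - 1 + 1 = k by ring] at h1
  -- the orbit facts
  have hO1 : ∀ a, a ≠ ℓ → (Ival le1 lam a ∩ Ival le2 lam ℓ).Nonempty := by
    intro a ha
    obtain ⟨n, hn⟩ := hx a
    refine ⟨TmapZ le1 le2 lam (t n) z, ?_, ?_⟩
    · have h := hcode (t n)
      rwa [hfirst n, hn] at h
    · have h := hJ (t n)
      rwa [hlast n] at h
  have hO1' : ∀ a, a ≠ ℓ → (Ival le2 lam a ∩ Ival le1 lam ℓ).Nonempty := by
    intro a ha
    obtain ⟨n, hn⟩ := hx a
    have hxn : x n ≠ ℓ := by rw [hn]; exact ha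
    refine ⟨TmapZ le1 le2 lam (t n + 1) z, ?_, ?_⟩
    · have h := hJ (t n + 1)
      rw [show t n + 1 - 1 = t n by ring, hfirst n, hn] at h
      exact h
    · have h := hcode (t n + 1)
      rwa [hsecond n hxn] at h
  have hO2 : (Ival le1 lam ℓ ∩ Ival le2 lam ℓ).Nonempty := by
    obtain ⟨n, hn⟩ := hx ℓ
    refine ⟨TmapZ le1 le2 lam (t n) z, ?_, ?_⟩
    · have h := hcode (t n)
      rwa [hfirst n, hn] at h
    · have h := hJ (t n)
      rwa [hlast n] at h
  obtain ⟨hcase, hl⟩ := geo le1 le2 lam ℓ hcard hpos hsum hO1 hO1' hO2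
  have hpos2 := lam2_pos lam ℓ hpos hl
  have hsum2 := lam2_sum lam ℓ hpos hsum
  -- the starting point lies in J_ℓ
  have hzJ : z ∈ Ival le2 lam ℓ := by
    have h := hJ 0
    rw [TmapZ_zero] at h
    rw [show (0:ℤ) - 1 = t 0 - 1 by rw [ht0], hlast 0] at h
    exact h
  set z' : ℝ := (z - lsum le2 lam ℓ) / lam ℓ with hz'def
  have hphiz : lam ℓ * z' + lsum le2 lam ℓ = z := by
    rw [hz'def]
    field_simp
    ring
  have hz'01 : z' ∈ Set.Ico (0:ℝ) 1 := by
    obtain ⟨h1, h2⟩ := hzJ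
    constructor
    · apply div_nonneg (by linarith) hlℓ.le
    · rw [div_lt_one hlℓ]
      linarith
  -- main conjugacy along the orbit
  have MAIN : ∀ n : ℤ, lam ℓ * TmapZ le1 le2 (lam2 lam ℓ) n z' + lsum le2 lam ℓ =
      TmapZ le1 le2 lam (t n) z := by
    intro n
    induction n using Int.induction_on with
    | zero => rw [TmapZ_zero, hphiz, ht0, TmapZ_zero]
    | succ m ih =>
        have hv01 : TmapZ le1 le2 (lam2 lam ℓ) (m : ℤ) z' ∈ Set.Ico (0:ℝ) 1 :=
          TmapZ_mem01 le1 le2 _ hpos2 hsum2 _ hz'01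
        obtain ⟨c, hc⟩ := exists_mem_Ival le1 (lam2 lam ℓ) hpos2 hsum2 hv01
        have hstep := stepB le1 le2 lam ℓ hpos hsum hcase hl hc
        rw [ih] at hstep
        have hTw : Tmap le1 le2 lam (TmapZ le1 le2 lam (t (m : ℤ)) z) =
            TmapZ le1 le2 lam (t (m : ℤ) + 1) z :=
          (TmapZ_succ le1 le2 lam hpos hsum (t (m : ℤ)) hz01).symm
        have hsucc' : TmapZ le1 le2 (lam2 lam ℓ) ((m : ℤ) + 1) z' =
            Tmap le1 le2 (lam2 lam ℓ) (TmapZ le1 le2 (lam2 lam ℓ) (m : ℤ) z') :=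
          TmapZ_succ le1 le2 _ hpos2 hsum2 _ hz'01
        have hcodem := hcode (t (m : ℤ))
        rw [hfirst _] at hcodem
        have hcx : c = x (m : ℤ) := Ival_unique le1 lam hpos hstep.1 hcodem
        by_cases hxm : x (m : ℤ) = ℓ
        · have hcℓ : c = ℓ := by rw [hcx, hxm]
          have heq2 := hstep.2.1 hcℓ
          rw [hsucc', heq2, hTw, hlen1 (m : ℤ) hxm]
        · have hcne : c ≠ ℓ := by rw [hcx]; exact hxm
          obtain ⟨_, heq2⟩ := hstep.2.2 hcne
          rw [hsucc', heq2, hTw, ← TmapZ_succ le1 le2 lam hpos hsum (t (m : ℤ) + 1) hz01,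
            hlen2 (m : ℤ) hxm, show t (m : ℤ) + 1 + 1 = t (m : ℤ) + 2 by ring]
    | pred m ih =>
        have hv01 : TmapZ le1 le2 (lam2 lam ℓ) (-(m : ℤ)) z' ∈ Set.Ico (0:ℝ) 1 :=
          TmapZ_mem01 le1 le2 _ hpos2 hsum2 _ hz'01
        obtain ⟨c, hc⟩ := exists_mem_Ival le2 (lam2 lam ℓ) hpos2 hsum2 hv01
        have hstep := stepB' le1 le2 lam ℓ hpos hsum hcase hl hc
        rw [ih] at hstep
        have hTw : Tmap le2 le1 lam (TmapZ le1 le2 lam (t (-(m : ℤ))) z) =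
            TmapZ le1 le2 lam (t (-(m : ℤ)) - 1) z :=
          (TmapZ_pred le1 le2 lam hpos hsum (t (-(m : ℤ))) hz01).symm
        have hpred' : TmapZ le1 le2 (lam2 lam ℓ) (-(m : ℤ) - 1) z' =
            Tmap le2 le1 (lam2 lam ℓ) (TmapZ le1 le2 (lam2 lam ℓ) (-(m : ℤ)) z') :=
          TmapZ_pred le1 le2 _ hpos2 hsum2 _ hz'01
        have hJm := hJ (t (-(m : ℤ)) - 1)
        by_cases hxm : x (-(m : ℤ) - 1) = ℓ
        · have hts : t (-(m : ℤ)) = t (-(m : ℤ) - 1) + 1 := by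
            have h' := hlen1 (-(m : ℤ) - 1) hxm
            rwa [show -(m : ℤ) - 1 + 1 = -(m : ℤ) by ring] at h'
          have hyb : y (t (-(m : ℤ)) - 1 - 1) = ℓ := by
            rw [hts, show t (-(m : ℤ) - 1) + 1 - 1 - 1 = t (-(m : ℤ) - 1) - 1 by ring]
            exact hlast _
          rw [hyb] at hJm
          have hcℓ : c = ℓ := by
            by_contra hcne
            obtain ⟨hmem, _⟩ := hstep.2.2 hcne
            rw [hTw] at hmem
            exact hcne (Ival_unique le2 lam hpos hmem hJm)
          obtain ⟨_, heq2⟩ := hstep.2.1 hcℓ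
          rw [hpred', heq2, hTw, hts,
            show t (-(m : ℤ) - 1) + 1 - 1 = t (-(m : ℤ) - 1) by ring]
        · have hts : t (-(m : ℤ)) = t (-(m : ℤ) - 1) + 2 := by
            have h' := hlen2 (-(m : ℤ) - 1) hxm
            rwa [show -(m : ℤ) - 1 + 1 = -(m : ℤ) by ring] at h'
          have hyb : y (t (-(m : ℤ)) - 1 - 1) = x (-(m : ℤ) - 1) := by
            rw [hts, show t (-(m : ℤ) - 1) + 2 - 1 - 1 = t (-(m : ℤ) - 1) by ring]
            exact hfirst _
          rw [hyb] at hJm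
          have hcx : c = x (-(m : ℤ) - 1) := by
            by_cases hcℓ : c = ℓ
            · obtain ⟨hmem, _⟩ := hstep.2.1 hcℓ
              rw [hTw] at hmem
              exact absurd (Ival_unique le2 lam hpos hJm hmem) hxm
            · obtain ⟨hmem, _⟩ := hstep.2.2 hcℓ
              rw [hTw] at hmem
              exact Ival_unique le2 lam hpos hmem hJm
          have hcne : c ≠ ℓ := by rw [hcx]; exact hxm
          obtain ⟨_, heq2⟩ := hstep.2.2 hcne
          rw [hpred', heq2, hTw,
            ← TmapZ_pred le1 le2 lam hpos hsum (t (-(m : ℤ)) - 1) hz01, hts,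
            show t (-(m : ℤ) - 1) + 2 - 1 - 1 = t (-(m : ℤ) - 1) by ring]
  refine ⟨lam2 lam ℓ, z', RIET2 le1 le2 lam ℓ hcard ⟨hpos, hsum, hinf, hdisj⟩ hcase hl,
    hz'01, ?_⟩
  intro n
  have hv01 : TmapZ le1 le2 (lam2 lam ℓ) n z' ∈ Set.Ico (0:ℝ) 1 :=
    TmapZ_mem01 le1 le2 _ hpos2 hsum2 _ hz'01
  obtain ⟨c, hc⟩ := exists_mem_Ival le1 (lam2 lam ℓ) hpos2 hsum2 hv01
  have hstep := stepB le1 le2 lam ℓ hpos hsum hcase hl hc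
  rw [MAIN n] at hstep
  have hcodem := hcode (t n)
  rw [hfirst n] at hcodem
  have hcx : c = x n := Ival_unique le1 lam hpos hstep.1 hcodem
  rw [← hcx]
  exact hc

end Part8

theorem stmt18 [Fintype A] [DecidableEq A] (h2 : 2 ≤ Fintype.card A)
    (ℓ : A) (x : ℤ → A) (hx : Function.Surjective x)
    (le1 le2 : LinearOrder A) :
    (∀ y : ℤ → A, IsImage (ARL ℓ) x y →
      (∃ (lam : A → ℝ) (z : ℝ), IsRIET le1 le2 lam ∧ z ∈ Set.Ico (0 : ℝ) 1 ∧
          IsNaturalCoding le1 le2 lam z y) →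
      ∃ (lam' : A → ℝ) (z' : ℝ), IsRIET le1 le2 lam' ∧ z' ∈ Set.Ico (0 : ℝ) 1 ∧
        IsNaturalCoding le1 le2 lam' z' x) ∧
    (∀ y : ℤ → A, IsImage (ARR ℓ) x y →
      (∃ (lam : A → ℝ) (z : ℝ), IsRIET le1 le2 lam ∧ z ∈ Set.Ico (0 : ℝ) 1 ∧
          IsNaturalCoding le1 le2 lam z y) →
      ∃ (lam' : A → ℝ) (z' : ℝ), IsRIET le1 le2 lam' ∧ z' ∈ Set.Ico (0 : ℝ) 1 ∧
        IsNaturalCoding le1 le2 lam' z' x) := by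
  constructor
  · intro y himg hex
    obtain ⟨lam, z, hRIET, hz01, hcode⟩ := hex
    exact codingL le1 le2 ℓ h2 hRIET hx himg hz01 hcode
  · intro y himg hex
    obtain ⟨lam, z, hRIET, hz01, hcode⟩ := hex
    exact codingR le1 le2 ℓ h2 hRIET hx himg hz01 hcode
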